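/- arXiv:2207.05302 — 9 statements merged into one kernel-verified Lean document; each statement's English description precedes it below -/
import Mathlib

section
/- Let 𝒰 be a set of utility functions that is consistent modulo α, and let d : 𝒳 → [0,1] be a decision policy. If d is a multiple threshold policy with respect to some u* ∈ 𝒰, then d is a multiple threshold policy with respect to every u ∈ 𝒰. Moreover, if d can be represented by non-negative thresholds with respect to u*, then it can be represented by non-negative thresholds with respect to every u ∈ 𝒰. -/
private lemma sign_neg_of_sign_eq {a b : ℝ} (h : Real.sign a = Real.sign b)
    (hb : b < 0) : a < 0 := by
  rcases lt_trichotomy a 0 with h1 | h1 | h1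
  · exact h1
  · rw [h1, Real.sign_zero, eq_comm, Real.sign_eq_zero_iff] at h
    simp [h] at hb
  · rw [Real.sign_of_pos h1, Real.sign_of_neg hb] at h
    norm_num at h

private lemma sign_pos_of_sign_eq {a b : ℝ} (h : Real.sign a = Real.sign b)
    (hb : 0 < b) : 0 < a := by
  rcases lt_trichotomy a 0 with h1 | h1 | h1
  · rw [Real.sign_of_neg h1, Real.sign_of_pos hb] at h
    norm_num at h
  · rw [h1, Real.sign_zero, eq_comm, Real.sign_eq_zero_iff] at h
    simp [h] at hb
  · exact h1

/-- If `𝒰` is consistent modulo `α` and `d` is a multiple threshold policy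
with respect to some `u* ∈ 𝒰`, then it is a multiple threshold policy with respect to every
`u ∈ 𝒰`; moreover non-negative thresholds can be preserved. -/
theorem multiple_threshold_independent_of_utility
    {𝒳 𝒜 : Type*} [Fintype 𝒜] [Nonempty 𝒜]
    (α : 𝒳 → 𝒜)
    (𝒰 : Set (𝒳 → ℝ))
    -- `𝒰` is consistent modulo `α`
    (hcons : ∀ u ∈ 𝒰, ∀ u' ∈ 𝒰,
      (∀ x, Real.sign (u x) = Real.sign (u' x)) ∧
      (∀ x₁ x₂, α x₁ = α x₂ → (u x₁ > u x₂ ↔ u' x₁ > u' x₂)))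
    -- `d` is a decision policy
    (d : 𝒳 → ℝ) (hd01 : ∀ x, d x ∈ Set.Icc (0 : ℝ) 1)
    (ustar : 𝒳 → ℝ) (hustar : ustar ∈ 𝒰) :
    -- if `d` is a multiple threshold policy w.r.t. `u*`, it is one w.r.t. every `u ∈ 𝒰`
    ((∃ t : 𝒜 → EReal,
        ∀ x, (t (α x) < (ustar x : EReal) → d x = 1) ∧
             ((ustar x : EReal) < t (α x) → d x = 0)) →
      ∀ u ∈ 𝒰, ∃ t : 𝒜 → EReal,
        ∀ x, (t (α x) < (u x : EReal) → d x = 1) ∧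
             ((u x : EReal) < t (α x) → d x = 0)) ∧
    -- and non-negative thresholds can be chosen non-negative for every `u ∈ 𝒰`
    ((∃ t : 𝒜 → EReal, (∀ a, 0 ≤ t a) ∧
        ∀ x, (t (α x) < (ustar x : EReal) → d x = 1) ∧
             ((ustar x : EReal) < t (α x) → d x = 0)) →
      ∀ u ∈ 𝒰, ∃ t : 𝒜 → EReal, (∀ a, 0 ≤ t a) ∧
        ∀ x, (t (α x) < (u x : EReal) → d x = 1) ∧
             ((u x : EReal) < t (α x) → d x = 0)) := by
  constructor
  · rintro ⟨t, ht⟩ u hu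
    obtain ⟨hsign, hmono⟩ := hcons ustar hustar u hu
    refine ⟨fun a => sSup {e : EReal | ∃ y, α y = a ∧ (ustar y : EReal) ≤ t a ∧ e = (u y : EReal)},
      fun x => ⟨?_, ?_⟩⟩
    · intro hlt
      apply (ht x).1
      by_contra hle
      push_neg at hle
      have hm : (u x : EReal) ∈ {e : EReal | ∃ y, α y = α x ∧ (ustar y : EReal) ≤ t (α x) ∧ e = (u y : EReal)} := ⟨x, rfl, hle, rfl⟩
      exact absurd (le_sSup hm) (not_le.mpr hlt)
    · intro hlt
      rw [lt_sSup_iff] at hlt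
      obtain ⟨e, ⟨y, hay, hy, rfl⟩, hxy⟩ := hlt
      have hxy' : u x < u y := EReal.coe_lt_coe_iff.mp hxy
      have : ustar x < ustar y := (hmono y x hay).mpr hxy'
      apply (ht x).2
      calc (ustar x : EReal) < (ustar y : EReal) := EReal.coe_lt_coe_iff.mpr this
        _ ≤ t (α x) := hay ▸ hy
  · rintro ⟨t, ht0, ht⟩ u hu
    obtain ⟨hsign, hmono⟩ := hcons ustar hustar u hu
    refine ⟨fun a => max (sSup {e : EReal | ∃ y, α y = a ∧ (ustar y : EReal) ≤ t a ∧ e = (u y : EReal)}) 0,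
      fun a => le_max_right _ _, fun x => ⟨?_, ?_⟩⟩
    · intro hlt
      rw [max_lt_iff] at hlt
      obtain ⟨hlt, _⟩ := hlt
      apply (ht x).1
      by_contra hle
      push_neg at hle
      have hm : (u x : EReal) ∈ {e : EReal | ∃ y, α y = α x ∧ (ustar y : EReal) ≤ t (α x) ∧ e = (u y : EReal)} := ⟨x, rfl, hle, rfl⟩
      exact absurd (le_sSup hm) (not_le.mpr hlt)
    · intro hlt
      rw [lt_max_iff] at hlt
      rcases hlt with hlt | hlt
      · rw [lt_sSup_iff] at hlt
        obtain ⟨e, ⟨y, hay, hy, rfl⟩, hxy⟩ := hlt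
        have hxy' : u x < u y := EReal.coe_lt_coe_iff.mp hxy
        have : ustar x < ustar y := (hmono y x hay).mpr hxy'
        apply (ht x).2
        calc (ustar x : EReal) < (ustar y : EReal) := EReal.coe_lt_coe_iff.mpr this
          _ ≤ t (α x) := hay ▸ hy
      · have hux : u x < 0 := by exact_mod_cast hlt
        have : ustar x < 0 := sign_neg_of_sign_eq (hsign x) hux
        apply (ht x).2
        calc (ustar x : EReal) < 0 := by exact_mod_cast this
          _ ≤ t (α x) := ht0 _
end

section
/- Fix a measurable utility function u : 𝒳 → ℝ with u(X) integrable and a budget b with 0 < b < 1. A feasible decision policy d maximizes u(d) = E[d(X)·u(X)] over all feasible policies if and only if d is a budget-exhausting threshold policy, i.e., there exists t ∈ [-∞,∞] such that almost surely d(X) = 1 when u(X) > t and d(X) = 0 when u(X) < t, and min(b, Pr(u(X) > 0)) ≤ E[d(X)] ≤ min(b, Pr(u(X) ≥ 0)). Moreover, at least one utility-maximizing feasible policy exists. -/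
/-!
Lagrangian duality. For a real `t`, a threshold policy at `t` maximizes `E[g (f - t)]` pointwise,
where `f = u ∘ X`; if moreover `t ≥ 0` and `t (b - E g) = 0` (complementary slackness), it
maximizes `E[g f]` among feasible policies. Such a policy exists: either `t = 0` already respects
the budget, or `t` is a `b`-quantile of `f` and the atom `{f = t}` is accepted with the probability
that exhausts the budget. An optimal policy has the same Lagrangian value as that one, so it agrees
with it off `{f = t}` and satisfies complementary slackness, which yields the two bounds on its
mass. Conversely, the mass bounds force a budget-exhausting threshold policy to be, up to null
sets, a threshold policy at `0` or to exhaust the budget at a real threshold `t > 0`.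
-/

open MeasureTheory Set Filter ProbabilityTheory

def IsThresholdPolicy {Ω : Type*} [MeasurableSpace Ω] (P : Measure Ω) (f g : Ω → ℝ)
    (t : EReal) : Prop :=
  ∀ᵐ ω ∂P, (t < f ω → g ω = 1) ∧ (f ω < t → g ω = 0)

lemma mul_sub_le_mul_sub_of_threshold {t s a a' : ℝ}
    (h : ((t : EReal) < s → a = 1) ∧ ((s : EReal) < t → a = 0)) (ha' : a' ∈ Icc (0 : ℝ) 1) :
    a' * (s - t) ≤ a * (s - t) := by
  rcases lt_trichotomy s t with hst | rfl | hst
  · rw [h.2 (EReal.coe_lt_coe_iff.2 hst)]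
    nlinarith [ha'.1]
  · simp
  · rw [h.1 (EReal.coe_lt_coe_iff.2 hst)]
    nlinarith [ha'.2]

lemma isThresholdPolicy_of_ae_eq_indicator {Ω : Type*} [MeasurableSpace Ω] {P : Measure Ω}
    {f g : Ω → ℝ} {t : EReal} {A : Set Ω} (hA : ∀ ω, (t < f ω → ω ∈ A) ∧ (f ω < t → ω ∉ A))
    (hg : g =ᵐ[P] A.indicator 1) : IsThresholdPolicy P f g t := by
  filter_upwards [hg] with ω hω
  exact ⟨fun h => by simp [hω, (hA ω).1 h], fun h => by simp [hω, (hA ω).2 h]⟩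

section Policies

variable {Ω : Type*} [MeasurableSpace Ω] {P : Measure Ω} {f g g' : Ω → ℝ}

lemma integrable_mul_of_mem_Icc (hg : Measurable g) (hg01 : ∀ ω, g ω ∈ Icc (0 : ℝ) 1)
    (hf : Integrable f P) : Integrable (fun ω => g ω * f ω) P :=
  hf.bdd_mul hg.aestronglyMeasurable
    (ae_of_all _ fun ω => abs_le.2 ⟨by linarith [(hg01 ω).1], (hg01 ω).2⟩)

variable [IsFiniteMeasure P]

lemma integrable_of_mem_Icc (hg : Measurable g) (hg01 : ∀ ω, g ω ∈ Icc (0 : ℝ) 1) :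
    Integrable g P := by
  simpa using integrable_mul_of_mem_Icc hg hg01 (integrable_const (1 : ℝ) (μ := P))

lemma integral_mul_sub_const (hg : Measurable g) (hg01 : ∀ ω, g ω ∈ Icc (0 : ℝ) 1)
    (hf : Integrable f P) (t : ℝ) :
    ∫ ω, g ω * (f ω - t) ∂P = ∫ ω, g ω * f ω ∂P - t * ∫ ω, g ω ∂P := by
  simp_rw [mul_sub]
  rw [integral_sub (integrable_mul_of_mem_Icc hg hg01 hf)
    ((integrable_of_mem_Icc hg hg01).mul_const t), integral_mul_const, mul_comm]

lemma ae_eq_indicator_of_integral_le {A : Set Ω} (hA : MeasurableSet A) (hg : Measurable g)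
    (hg01 : ∀ ω, g ω ∈ Icc (0 : ℝ) 1) (h1 : ∀ᵐ ω ∂P, ω ∈ A → g ω = 1)
    (hle : ∫ ω, g ω ∂P ≤ P.real A) : g =ᵐ[P] A.indicator 1 := by
  have hAg : A.indicator 1 ≤ᵐ[P] g := h1.mono fun ω hω => by
    by_cases hωA : ω ∈ A
    · simp [hωA, hω hωA]
    · simp [hωA, (hg01 ω).1]
  have hint : Integrable (A.indicator (1 : Ω → ℝ)) P := (integrable_const 1).indicator hA
  refine ((integral_eq_iff_of_ae_le hint (integrable_of_mem_Icc hg hg01) hAg).1 ?_).symm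
  exact le_antisymm (integral_mono_ae hint (integrable_of_mem_Icc hg hg01) hAg)
    (by rwa [integral_indicator_one hA])

lemma ae_eq_indicator_of_le_integral {A : Set Ω} (hA : MeasurableSet A) (hg : Measurable g)
    (hg01 : ∀ ω, g ω ∈ Icc (0 : ℝ) 1) (h0 : ∀ᵐ ω ∂P, ω ∉ A → g ω = 0)
    (hle : P.real A ≤ ∫ ω, g ω ∂P) : g =ᵐ[P] A.indicator 1 := by
  have hgA : g ≤ᵐ[P] A.indicator 1 := h0.mono fun ω hω => by
    by_cases hωA : ω ∈ A
    · simp [hωA, (hg01 ω).2]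
    · simp [hωA, hω hωA]
  have hint : Integrable (A.indicator (1 : Ω → ℝ)) P := (integrable_const 1).indicator hA
  refine (integral_eq_iff_of_ae_le (integrable_of_mem_Icc hg hg01) hint hgA).1 ?_
  exact le_antisymm (integral_mono_ae (integrable_of_mem_Icc hg hg01) hint hgA)
    (by rwa [integral_indicator_one hA])

namespace IsThresholdPolicy

variable {t : EReal}

lemma measureReal_lt_le_integral (h : IsThresholdPolicy P f g t) (hf : Measurable f)
    (hg : Measurable g) (hg01 : ∀ ω, g ω ∈ Icc (0 : ℝ) 1) :
    P.real {ω | t < f ω} ≤ ∫ ω, g ω ∂P := by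
  have hA : MeasurableSet {ω | t < f ω} := measurableSet_lt measurable_const hf.coe_real_ereal
  rw [← integral_indicator_one hA]
  refine integral_mono_ae ((integrable_const (1 : ℝ)).indicator hA)
    (integrable_of_mem_Icc hg hg01) (h.mono fun ω hω => ?_)
  by_cases hωA : t < f ω
  · simp [hωA, hω.1 hωA]
  · simp [hωA, (hg01 ω).1]

lemma integral_le_measureReal_le (h : IsThresholdPolicy P f g t) (hf : Measurable f)
    (hg : Measurable g) (hg01 : ∀ ω, g ω ∈ Icc (0 : ℝ) 1) :
    ∫ ω, g ω ∂P ≤ P.real {ω | t ≤ f ω} := by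
  have hA : MeasurableSet {ω | t ≤ f ω} := measurableSet_le measurable_const hf.coe_real_ereal
  rw [← integral_indicator_one hA]
  refine integral_mono_ae (integrable_of_mem_Icc hg hg01)
    ((integrable_const (1 : ℝ)).indicator hA) (h.mono fun ω hω => ?_)
  by_cases hωA : t ≤ f ω
  · simp [hωA, (hg01 ω).2]
  · simp [hωA, hω.2 (not_le.1 hωA)]

lemma zero_of_neg (h : IsThresholdPolicy P f g t) (ht : t < 0)
    (hf : Measurable f) (hg : Measurable g) (hg01 : ∀ ω, g ω ∈ Icc (0 : ℝ) 1)
    (hle : ∫ ω, g ω ∂P ≤ P.real {ω | 0 ≤ f ω}) : IsThresholdPolicy P f g 0 := by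
  set A := {ω | t < f ω}
  have hA : MeasurableSet A := measurableSet_lt measurable_const hf.coe_real_ereal
  have hsub : {ω | 0 ≤ f ω} ⊆ A := fun ω hω => ht.trans_le (EReal.coe_nonneg.2 hω)
  have hmeas : P.real A ≤ P.real {ω | 0 ≤ f ω} :=
    (h.measureReal_lt_le_integral hf hg hg01).trans hle
  have hAeq : {ω | 0 ≤ f ω} =ᵐ[P] A := ae_eq_of_subset_of_measure_ge hsub
    ((ENNReal.toReal_le_toReal (measure_ne_top _ _) (measure_ne_top _ _)).1 hmeas)
    (hf measurableSet_Ici).nullMeasurableSet (measure_ne_top _ _)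
  have hgA := ae_eq_indicator_of_integral_le hA hg hg01 (h.mono fun ω hω => hω.1)
    (hle.trans (measureReal_mono hsub))
  refine isThresholdPolicy_of_ae_eq_indicator (fun ω => ?_)
    (hgA.trans (indicator_ae_eq_of_ae_eq_set hAeq.symm))
  simp only [mem_ofPred_eq, EReal.coe_pos, EReal.coe_neg', not_le]
  exact ⟨le_of_lt, id⟩

lemma zero_of_pos (h : IsThresholdPolicy P f g t) (ht : 0 < t)
    (hf : Measurable f) (hg : Measurable g) (hg01 : ∀ ω, g ω ∈ Icc (0 : ℝ) 1)
    (hle : P.real {ω | 0 < f ω} ≤ ∫ ω, g ω ∂P) : IsThresholdPolicy P f g 0 := by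
  set A := {ω | t ≤ f ω}
  have hA : MeasurableSet A := measurableSet_le measurable_const hf.coe_real_ereal
  have hsub : A ⊆ {ω | 0 < f ω} := fun ω hω => EReal.coe_pos.1 (ht.trans_le hω)
  have hmeas : P.real {ω | 0 < f ω} ≤ P.real A :=
    hle.trans (h.integral_le_measureReal_le hf hg hg01)
  have hAeq : A =ᵐ[P] {ω | 0 < f ω} := ae_eq_of_subset_of_measure_ge hsub
    ((ENNReal.toReal_le_toReal (measure_ne_top _ _) (measure_ne_top _ _)).1 hmeas)
    hA.nullMeasurableSet (measure_ne_top _ _)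
  have hgA := ae_eq_indicator_of_le_integral hA hg hg01
    (h.mono fun ω hω hωA => hω.2 (not_le.1 hωA)) ((measureReal_mono hsub).trans hle)
  refine isThresholdPolicy_of_ae_eq_indicator (fun ω => ?_)
    (hgA.trans (indicator_ae_eq_of_ae_eq_set hAeq))
  simp only [mem_ofPred_eq, EReal.coe_pos, EReal.coe_neg', not_lt]
  exact ⟨id, le_of_lt⟩

variable {b : ℝ}

lemma exists_real_slack (h : IsThresholdPolicy P f g t) (hf : Measurable f) (hg : Measurable g)
    (hg01 : ∀ ω, g ω ∈ Icc (0 : ℝ) 1) (hb : 0 < b)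
    (hlow : min b (P.real {ω | 0 < f ω}) ≤ ∫ ω, g ω ∂P)
    (hupp : ∫ ω, g ω ∂P ≤ min b (P.real {ω | 0 ≤ f ω})) :
    ∃ r : ℝ, 0 ≤ r ∧ IsThresholdPolicy P f g r ∧ r * (b - ∫ ω, g ω ∂P) = 0 := by
  rcases lt_trichotomy t 0 with ht | rfl | ht
  · exact ⟨0, le_rfl, h.zero_of_neg ht hf hg hg01
      (hupp.trans (min_le_right _ _)), zero_mul _⟩
  · exact ⟨0, le_rfl, h, zero_mul _⟩
  by_cases hpos : P.real {ω | 0 < f ω} ≤ ∫ ω, g ω ∂P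
  · exact ⟨0, le_rfl, h.zero_of_pos ht hf hg hg01 hpos, zero_mul _⟩
  have hgb : ∫ ω, g ω ∂P = b :=
    le_antisymm (hupp.trans (min_le_left _ _)) ((min_le_iff.1 hlow).resolve_right hpos)
  have ht_top : t ≠ ⊤ := by
    rintro rfl
    have := h.integral_le_measureReal_le hf hg hg01
    simp only [top_le_iff, EReal.coe_ne_top, ofPred_false, measureReal_empty] at this
    linarith
  refine ⟨t.toReal, EReal.toReal_nonneg ht.le, ?_, by rw [hgb, sub_self, mul_zero]⟩
  rwa [EReal.coe_toReal ht_top ht.ne_bot]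

variable {t : ℝ}

lemma integral_mul_sub_le (h : IsThresholdPolicy P f g t) (hf : Integrable f P)
    (hg : Measurable g) (hg01 : ∀ ω, g ω ∈ Icc (0 : ℝ) 1) (hg' : Measurable g')
    (hg'01 : ∀ ω, g' ω ∈ Icc (0 : ℝ) 1) :
    ∫ ω, g' ω * (f ω - t) ∂P ≤ ∫ ω, g ω * (f ω - t) ∂P :=
  integral_mono_ae (integrable_mul_of_mem_Icc hg' hg'01 (hf.sub (integrable_const t)))
    (integrable_mul_of_mem_Icc hg hg01 (hf.sub (integrable_const t)))
    (h.mono fun ω hω => mul_sub_le_mul_sub_of_threshold hω (hg'01 ω))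

lemma of_integral_mul_sub_eq (h : IsThresholdPolicy P f g t) (hf : Integrable f P)
    (hg : Measurable g) (hg01 : ∀ ω, g ω ∈ Icc (0 : ℝ) 1) (hg' : Measurable g')
    (hg'01 : ∀ ω, g' ω ∈ Icc (0 : ℝ) 1)
    (heq : ∫ ω, g' ω * (f ω - t) ∂P = ∫ ω, g ω * (f ω - t) ∂P) :
    IsThresholdPolicy P f g' t := by
  have hae := (integral_eq_iff_of_ae_le
    (integrable_mul_of_mem_Icc hg' hg'01 (hf.sub (integrable_const t)))
    (integrable_mul_of_mem_Icc hg hg01 (hf.sub (integrable_const t)))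
    (h.mono fun ω hω => mul_sub_le_mul_sub_of_threshold hω (hg'01 ω))).1 heq
  filter_upwards [h, hae] with ω hω hωeq
  have hcancel : f ω ≠ t → g' ω = g ω := fun hne => mul_right_cancel₀ (sub_ne_zero.2 hne) hωeq
  exact ⟨fun hlt => (hcancel (EReal.coe_lt_coe_iff.1 hlt).ne').trans (hω.1 hlt),
    fun hlt => (hcancel (EReal.coe_lt_coe_iff.1 hlt).ne).trans (hω.2 hlt)⟩

lemma integral_mul_le (h : IsThresholdPolicy P f g t) (ht : 0 ≤ t)
    (hslack : t * (b - ∫ ω, g ω ∂P) = 0) (hf : Integrable f P) (hg : Measurable g)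
    (hg01 : ∀ ω, g ω ∈ Icc (0 : ℝ) 1) (hg' : Measurable g') (hg'01 : ∀ ω, g' ω ∈ Icc (0 : ℝ) 1)
    (hg'b : ∫ ω, g' ω ∂P ≤ b) :
    ∫ ω, g' ω * f ω ∂P ≤ ∫ ω, g ω * f ω ∂P := by
  have hL := h.integral_mul_sub_le hf hg hg01 hg' hg'01
  rw [integral_mul_sub_const hg hg01 hf, integral_mul_sub_const hg' hg'01 hf] at hL
  nlinarith [mul_le_mul_of_nonneg_left hg'b ht]

lemma slack_of_integral_mul_le (h : IsThresholdPolicy P f g t) (ht : 0 ≤ t)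
    (hslack : t * (b - ∫ ω, g ω ∂P) = 0) (hf : Integrable f P) (hg : Measurable g)
    (hg01 : ∀ ω, g ω ∈ Icc (0 : ℝ) 1) (hg' : Measurable g') (hg'01 : ∀ ω, g' ω ∈ Icc (0 : ℝ) 1)
    (hg'b : ∫ ω, g' ω ∂P ≤ b) (hopt : ∫ ω, g ω * f ω ∂P ≤ ∫ ω, g' ω * f ω ∂P) :
    IsThresholdPolicy P f g' t ∧ t * (b - ∫ ω, g' ω ∂P) = 0 := by
  have hL := h.integral_mul_sub_le hf hg hg01 hg' hg'01
  rw [integral_mul_sub_const hg hg01 hf, integral_mul_sub_const hg' hg'01 hf] at hL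
  have hslack' : t * (b - ∫ ω, g' ω ∂P) = 0 := by
    nlinarith [mul_le_mul_of_nonneg_left hg'b ht]
  refine ⟨h.of_integral_mul_sub_eq hf hg hg01 hg' hg'01 ?_, hslack'⟩
  rw [integral_mul_sub_const hg hg01 hf, integral_mul_sub_const hg' hg'01 hf]
  linarith

lemma budget_bounds_of_slack (h : IsThresholdPolicy P f g t) (ht : 0 ≤ t)
    (hslack : t * (b - ∫ ω, g ω ∂P) = 0) (hf : Measurable f) (hg : Measurable g)
    (hg01 : ∀ ω, g ω ∈ Icc (0 : ℝ) 1) (hgb : ∫ ω, g ω ∂P ≤ b) :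
    min b (P.real {ω | 0 < f ω}) ≤ ∫ ω, g ω ∂P ∧
      ∫ ω, g ω ∂P ≤ min b (P.real {ω | 0 ≤ f ω}) := by
  have hupp := h.integral_le_measureReal_le hf hg hg01
  simp only [EReal.coe_le_coe_iff] at hupp
  rcases ht.eq_or_lt with rfl | ht
  · have hlow := h.measureReal_lt_le_integral hf hg hg01
    simp only [EReal.coe_lt_coe_iff] at hlow
    exact ⟨(min_le_right _ _).trans hlow, le_min hgb hupp⟩
  have hgb' : ∫ ω, g ω ∂P = b := by
    have := (mul_eq_zero.1 hslack).resolve_left ht.ne'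
    linarith
  exact ⟨hgb' ▸ min_le_left _ _,
    le_min hgb (hupp.trans (measureReal_mono fun ω hω => ht.le.trans hω))⟩

end IsThresholdPolicy

end Policies

lemma exists_measureReal_Ioi_le_le_measureReal_Ici (μ : Measure ℝ) [IsProbabilityMeasure μ]
    {c : ℝ} (hc0 : 0 < c) (hc1 : c < 1) :
    ∃ t : ℝ, μ.real (Ioi t) ≤ c ∧ c ≤ μ.real (Ici t) := by
  set F := cdf μ
  set S := {s : ℝ | 1 - c ≤ F s}
  have hS : S.Nonempty :=
    ((tendsto_cdf_atTop μ).eventually_const_lt (by linarith)).exists.imp fun _ h => h.le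
  obtain ⟨s₀, hs₀⟩ := eventually_atBot.1
    ((tendsto_cdf_atBot μ).eventually_lt_const (show (0 : ℝ) < 1 - c by linarith))
  have hSbdd : BddBelow S := ⟨s₀, fun s hs => le_of_not_gt fun hlt => (hs₀ s hlt.le).not_ge hs⟩
  set t := sInf S
  have hFt : 1 - c ≤ F t := by
    refine ge_of_tendsto ((F.right_continuous t).mono Ioi_subset_Ici_self)
      (eventually_nhdsWithin_of_forall fun s hs => ?_)
    obtain ⟨s', hs'S, hs's⟩ := exists_lt_of_csInf_lt hS hs
    exact hs'S.trans (F.mono hs's.le)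
  have hleftLim : Function.leftLim F t ≤ 1 - c := by
    rw [F.mono.leftLim_eq_sSup]
    refine csSup_le (nonempty_Iio.image _) ?_
    rintro _ ⟨s, hs, rfl⟩
    exact le_of_lt (not_le.1 (notMem_of_lt_csInf (s := S) hs hSbdd))
  refine ⟨t, ?_, ?_⟩
  · rw [← compl_Iic, measureReal_compl measurableSet_Iic, probReal_univ, ← cdf_eq_real]
    linarith
  · rw [measureReal_def, ← measure_cdf μ, F.measure_Ici (tendsto_cdf_atTop μ),
      ENNReal.toReal_ofReal (by linarith [F.mono.leftLim_le le_rfl (x := t), cdf_le_one μ t])]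
    linarith

noncomputable def thresholdStep (t θ : ℝ) (s : ℝ) : ℝ :=
  (Ioi t).indicator (fun _ => 1) s + ({t} : Set ℝ).indicator (fun _ => θ) s

section ThresholdStep

variable {t θ : ℝ}

lemma measurable_thresholdStep : Measurable (thresholdStep t θ) :=
  (measurable_const.indicator measurableSet_Ioi).add
    (measurable_const.indicator (measurableSet_singleton t))

lemma thresholdStep_mem_Icc (hθ : θ ∈ Icc (0 : ℝ) 1) (s : ℝ) :
    thresholdStep t θ s ∈ Icc (0 : ℝ) 1 := by
  rcases lt_trichotomy s t with hst | rfl | hst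
  · simp [thresholdStep, hst.ne, hst.not_gt]
  · simpa [thresholdStep] using hθ
  · simp [thresholdStep, hst, hst.ne']

lemma isThresholdPolicy_thresholdStep {Ω : Type*} [MeasurableSpace Ω] (P : Measure Ω)
    (f : Ω → ℝ) : IsThresholdPolicy P f (fun ω => thresholdStep t θ (f ω)) t :=
  ae_of_all _ fun ω => by
    simp only [EReal.coe_lt_coe_iff]
    exact ⟨fun h => by simp [thresholdStep, h, h.ne'], fun h => by
      simp [thresholdStep, h.ne, h.not_gt]⟩

lemma integral_thresholdStep (μ : Measure ℝ) [IsFiniteMeasure μ] :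
    ∫ s, thresholdStep t θ s ∂μ = μ.real (Ioi t) + θ * μ.real {t} := by
  unfold thresholdStep
  rw [integral_add ((integrable_const 1).indicator measurableSet_Ioi)
      ((integrable_const θ).indicator (measurableSet_singleton t)),
    integral_indicator_const 1 measurableSet_Ioi,
    integral_indicator_const θ (measurableSet_singleton t), smul_eq_mul, smul_eq_mul, mul_one,
    mul_comm]

end ThresholdStep

lemma exists_thresholdStep_slack (μ : Measure ℝ) [IsProbabilityMeasure μ] {b : ℝ}
    (hb0 : 0 < b) (hb1 : b < 1) :
    ∃ t θ : ℝ, 0 ≤ t ∧ θ ∈ Icc (0 : ℝ) 1 ∧ ∫ s, thresholdStep t θ s ∂μ ≤ b ∧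
      t * (b - ∫ s, thresholdStep t θ s ∂μ) = 0 := by
  by_cases hpos : μ.real (Ioi 0) ≤ b
  · refine ⟨0, 0, le_rfl, ⟨le_rfl, zero_le_one⟩, ?_, zero_mul _⟩
    rwa [integral_thresholdStep, zero_mul, add_zero]
  obtain ⟨t, hIoi, hIci⟩ := exists_measureReal_Ioi_le_le_measureReal_Ici μ hb0 hb1
  have ht : 0 ≤ t := le_of_not_gt fun ht =>
    hpos ((measureReal_mono (Ioi_subset_Ioi ht.le)).trans hIoi)
  have hIci_eq : μ.real (Ici t) = μ.real (Ioi t) + μ.real {t} := by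
    rw [← Ioi_union_left, measureReal_union (μ := μ) (s₁ := Ioi t)
      (disjoint_singleton_right.2 (lt_irrefl t)) (measurableSet_singleton t)]
  -- if `μ {t} = 0`, division by zero gives `θ = 0`, and then `μ (Ioi t) = b` already
  set θ := (b - μ.real (Ioi t)) / μ.real {t}
  have hmass : μ.real (Ioi t) + θ * μ.real {t} = b := by
    rcases (measureReal_nonneg (μ := μ) (s := {t})).eq_or_lt with h0 | h0
    · rw [← h0] at hIci_eq ⊢
      linarith
    · rw [div_mul_cancel₀ _ h0.ne']
      ring
  refine ⟨t, θ, ht, ⟨div_nonneg (by linarith) measureReal_nonneg,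
    div_le_one_of_le₀ (by linarith) measureReal_nonneg⟩, ?_, ?_⟩ <;>
    rw [integral_thresholdStep, hmass]
  simp

/-- A feasible policy is utility maximizing iff it is a budget-exhausting
threshold policy; moreover a utility-maximizing feasible policy exists. -/
theorem utility_maximizing_iff_budget_exhausting_threshold
    {Ω 𝒳 : Type*} [MeasurableSpace Ω] [MeasurableSpace 𝒳]
    (P : Measure Ω) [IsProbabilityMeasure P]
    (X : Ω → 𝒳) (hX : Measurable X)
    (u : 𝒳 → ℝ) (hu : Measurable u) (hint : Integrable (fun ω => u (X ω)) P)
    (b : ℝ) (hb0 : 0 < b) (hb1 : b < 1)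
    (d : 𝒳 → ℝ) (hd : Measurable d) (hd01 : ∀ x, d x ∈ Set.Icc (0 : ℝ) 1)
    (hfeas : ∫ ω, d (X ω) ∂P ≤ b) :
    -- `d` maximizes utility among feasible policies iff it is a budget-exhausting
    -- threshold policy
    ((∀ d' : 𝒳 → ℝ, Measurable d' → (∀ x, d' x ∈ Set.Icc (0 : ℝ) 1) →
        (∫ ω, d' (X ω) ∂P ≤ b) →
        ∫ ω, d' (X ω) * u (X ω) ∂P ≤ ∫ ω, d (X ω) * u (X ω) ∂P) ↔
      (∃ t : EReal,
        (∀ᵐ ω ∂P, (t < (u (X ω) : EReal) → d (X ω) = 1) ∧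
                  ((u (X ω) : EReal) < t → d (X ω) = 0)) ∧
        min b (P {ω | 0 < u (X ω)}).toReal ≤ ∫ ω, d (X ω) ∂P ∧
        ∫ ω, d (X ω) ∂P ≤ min b (P {ω | 0 ≤ u (X ω)}).toReal)) ∧
    -- moreover, a utility-maximizing feasible policy exists
    (∃ d₀ : 𝒳 → ℝ, Measurable d₀ ∧ (∀ x, d₀ x ∈ Set.Icc (0 : ℝ) 1) ∧
      (∫ ω, d₀ (X ω) ∂P ≤ b) ∧
      ∀ d' : 𝒳 → ℝ, Measurable d' → (∀ x, d' x ∈ Set.Icc (0 : ℝ) 1) →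
        (∫ ω, d' (X ω) ∂P ≤ b) →
        ∫ ω, d' (X ω) * u (X ω) ∂P ≤ ∫ ω, d₀ (X ω) * u (X ω) ∂P) := by
  have hf : Measurable fun ω => u (X ω) := hu.comp hX
  have hdX01 : ∀ ω, d (X ω) ∈ Icc (0 : ℝ) 1 := fun ω => hd01 (X ω)
  have := Measure.isProbabilityMeasure_map (μ := P) hf.aemeasurable
  obtain ⟨t₀, θ, ht₀, hθ, hfeas₀, hslack₀⟩ :=
    exists_thresholdStep_slack (P.map fun ω => u (X ω)) hb0 hb1
  rw [integral_map hf.aemeasurable measurable_thresholdStep.aestronglyMeasurable]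
    at hfeas₀ hslack₀
  set d₀ : 𝒳 → ℝ := fun x => thresholdStep t₀ θ (u x)
  have hd₀ : Measurable d₀ := measurable_thresholdStep.comp hu
  have hd₀01 : ∀ x, d₀ x ∈ Icc (0 : ℝ) 1 := fun x => thresholdStep_mem_Icc hθ (u x)
  have h₀ : IsThresholdPolicy P (fun ω => u (X ω)) (fun ω => d₀ (X ω)) t₀ :=
    isThresholdPolicy_thresholdStep P _
  have hopt₀ : ∀ d' : 𝒳 → ℝ, Measurable d' → (∀ x, d' x ∈ Icc (0 : ℝ) 1) →
      ∫ ω, d' (X ω) ∂P ≤ b → ∫ ω, d' (X ω) * u (X ω) ∂P ≤ ∫ ω, d₀ (X ω) * u (X ω) ∂P :=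
    fun d' hd' hd'01 hd'b => h₀.integral_mul_le ht₀ hslack₀ hint (hd₀.comp hX)
      (fun ω => hd₀01 (X ω)) (hd'.comp hX) (fun ω => hd'01 (X ω)) hd'b
  refine ⟨⟨fun hopt => ?_, fun ⟨t, ht, hlow, hupp⟩ => ?_⟩, d₀, hd₀, hd₀01, hfeas₀, hopt₀⟩
  · obtain ⟨hthr, hslack⟩ := h₀.slack_of_integral_mul_le ht₀ hslack₀ hint (hd₀.comp hX)
      (fun ω => hd₀01 (X ω)) (hd.comp hX) hdX01 hfeas (hopt d₀ hd₀ hd₀01 hfeas₀)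
    exact ⟨t₀, hthr, hthr.budget_bounds_of_slack ht₀ hslack hf (hd.comp hX) hdX01 hfeas⟩
  · obtain ⟨r, hr, hthr, hslack⟩ :=
      IsThresholdPolicy.exists_real_slack ht hf (hd.comp hX) hdX01 hb0 hlow hupp
    exact fun d' hd' hd'01 hd'b => hthr.integral_mul_le hr hslack hint (hd.comp hX) hdX01
      (hd'.comp hX) (fun ω => hd'01 (X ω)) hd'b
end

section
/- Suppose the distribution of u(X) is absolutely continuous with respect to Lebesgue measure (for each group a with Pr(A = a) > 0, the conditional distribution of u(X) given A = a then also has a density). Let τ₀ and τ₁ be multiple threshold policies with respect to u. If τ₀ and τ₁ have the same thresholds (t_a)_{a∈𝒜}, then τ₀(X) = τ₁(X) almost surely. Moreover, if E[τ₀(X) | A = a] = E[τ₁(X) | A = a] for every a ∈ 𝒜 with Pr(A = a) > 0, then τ₀(X) = τ₁(X) almost surely. -/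
open MeasureTheory

lemma aux_B {Ω : Type*} [MeasurableSpace Ω] (P : Measure Ω) [IsProbabilityMeasure P]
    (S N : Set Ω) (hN : P N = 0)
    (f₀ f₁ : Ω → ℝ) (hf₀ : Measurable f₀) (hf₁ : Measurable f₁)
    (hb₀ : ∀ ω, f₀ ω ∈ Set.Icc (0:ℝ) 1) (hb₁ : ∀ ω, f₁ ω ∈ Set.Icc (0:ℝ) 1)
    (hle : ∀ ω ∈ S \ N, f₁ ω ≤ f₀ ω)
    (hint : ∫ ω in S, f₀ ω ∂P = ∫ ω in S, f₁ ω ∂P) :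
    P ({ω | f₀ ω ≠ f₁ ω} ∩ S) = 0 := by
  have hi₀ : Integrable f₀ (P.restrict S) := by
    refine Integrable.mono' (integrable_const 1) hf₀.aestronglyMeasurable ?_
    exact Filter.Eventually.of_forall fun ω => by
      rw [Real.norm_eq_abs, abs_le]
      exact ⟨by linarith [(hb₀ ω).1], (hb₀ ω).2⟩
  have hi₁ : Integrable f₁ (P.restrict S) := by
    refine Integrable.mono' (integrable_const 1) hf₁.aestronglyMeasurable ?_
    exact Filter.Eventually.of_forall fun ω => by
      rw [Real.norm_eq_abs, abs_le]
      exact ⟨by linarith [(hb₁ ω).1], (hb₁ ω).2⟩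
  have hgm : Measurable (fun ω => f₀ ω - f₁ ω) := hf₀.sub hf₁
  have hnonneg : 0 ≤ᵐ[P.restrict S] fun ω => f₀ ω - f₁ ω := by
    have hms : MeasurableSet {ω | f₀ ω - f₁ ω < 0} := measurableSet_lt hgm measurable_const
    rw [Filter.EventuallyLE, ae_iff]
    simp only [Pi.zero_apply, not_le]
    rw [Measure.restrict_apply hms]
    refine measure_mono_null ?_ hN
    rintro ω ⟨hω, hS⟩
    by_contra hNω
    simp only [Set.mem_setOf_eq] at hω
    linarith [hle ω ⟨hS, hNω⟩]
  have h0 : ∫ ω, (f₀ ω - f₁ ω) ∂(P.restrict S) = 0 := by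
    rw [integral_sub hi₀ hi₁, sub_eq_zero]
    exact hint
  have hae := (integral_eq_zero_iff_of_nonneg_ae hnonneg (hi₀.sub hi₁)).mp h0
  have hms : MeasurableSet {ω | f₀ ω - f₁ ω ≠ 0} :=
    (hgm (measurableSet_singleton 0)).compl
  have hz : P ({ω | f₀ ω - f₁ ω ≠ 0} ∩ S) = 0 := by
    have h := ae_iff.mp hae
    simp only [Pi.zero_apply] at h
    rw [Measure.restrict_apply hms] at h
    exact h
  refine measure_mono_null ?_ hz
  exact Set.inter_subset_inter_left S fun ω hω => sub_ne_zero_of_ne hω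


/-- If the distribution of `u(X)` has a Lebesgue density, then multiple
threshold policies with the same thresholds agree a.s., and multiple threshold policies with
the same group-wise positive rates agree a.s. -/
theorem threshold_policies_determined
    {Ω 𝒳 𝒜 : Type*} [MeasurableSpace Ω] [MeasurableSpace 𝒳]
    [MeasurableSpace 𝒜] [Fintype 𝒜] [Nonempty 𝒜]
    (P : Measure Ω) [IsProbabilityMeasure P]
    (X : Ω → 𝒳) (hX : Measurable X)
    (α : 𝒳 → 𝒜) (hα : Measurable α)
    (u : 𝒳 → ℝ) (hu : Measurable u)
    -- the distribution of `u(X)` is absolutely continuous w.r.t. Lebesgue measure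
    (hac : Measure.map (fun ω => u (X ω)) P ≪ (volume : Measure ℝ))
    (τ₀ τ₁ : 𝒳 → ℝ) (hτ₀ : Measurable τ₀) (hτ₁ : Measurable τ₁)
    (h01₀ : ∀ x, τ₀ x ∈ Set.Icc (0 : ℝ) 1) (h01₁ : ∀ x, τ₁ x ∈ Set.Icc (0 : ℝ) 1)
    (t₀ t₁ : 𝒜 → EReal)
    -- `τ₀` and `τ₁` are multiple threshold policies with thresholds `t₀`, `t₁`
    (hth₀ : ∀ x, (t₀ (α x) < (u x : EReal) → τ₀ x = 1) ∧
                 ((u x : EReal) < t₀ (α x) → τ₀ x = 0))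
    (hth₁ : ∀ x, (t₁ (α x) < (u x : EReal) → τ₁ x = 1) ∧
                 ((u x : EReal) < t₁ (α x) → τ₁ x = 0)) :
    -- same thresholds imply a.s. equality
    ((t₀ = t₁) → (fun ω => τ₀ (X ω)) =ᵐ[P] fun ω => τ₁ (X ω)) ∧
    -- equal group-wise positive rates imply a.s. equality
    ((∀ a : 𝒜, P {ω | α (X ω) = a} ≠ 0 →
        ∫ ω in {ω | α (X ω) = a}, τ₀ (X ω) ∂P
          = ∫ ω in {ω | α (X ω) = a}, τ₁ (X ω) ∂P) →
      (fun ω => τ₀ (X ω)) =ᵐ[P] fun ω => τ₁ (X ω)) := by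
  have hnull : ∀ e : EReal, P {ω | ((u (X ω) : EReal)) = e} = 0 := by
    intro e
    induction e using EReal.rec with
    | bot =>
        have : {ω | ((u (X ω) : EReal)) = (⊥ : EReal)} = ∅ := by
          ext ω; simp [EReal.coe_ne_bot]
        simp [this]
    | coe r =>
        have heq : {ω | ((u (X ω) : EReal)) = ((r : ℝ) : EReal)} = (fun ω => u (X ω)) ⁻¹' {r} := by
          ext ω; simp [EReal.coe_eq_coe_iff]
        have hm : Measurable fun ω => u (X ω) := hu.comp hX
        rw [heq, ← Measure.map_apply hm (measurableSet_singleton r)]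
        exact hac Real.volume_singleton
    | top =>
        have : {ω | ((u (X ω) : EReal)) = (⊤ : EReal)} = ∅ := by
          ext ω; simp [EReal.coe_ne_top]
        simp [this]
  constructor
  · intro ht
    subst ht
    have hN : P (⋃ a : 𝒜, {ω | ((u (X ω)) : EReal) = t₀ a}) = 0 :=
      measure_iUnion_null fun a => hnull _
    have hE : ∀ᵐ ω ∂P, ((u (X ω)) : EReal) ≠ t₀ (α (X ω)) := by
      rw [ae_iff]
      refine measure_mono_null ?_ hN
      intro ω hω
      simp only [Set.mem_setOf_eq, not_not] at hω
      exact Set.mem_iUnion.2 ⟨α (X ω), hω⟩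
    filter_upwards [hE] with ω hω
    rcases lt_or_gt_of_ne hω with h | h
    · rw [(hth₀ (X ω)).2 h, (hth₁ (X ω)).2 h]
    · rw [(hth₀ (X ω)).1 h, (hth₁ (X ω)).1 h]
  · intro hrates
    have key : ∀ a : 𝒜, P ({ω | τ₀ (X ω) ≠ τ₁ (X ω)} ∩ {ω | α (X ω) = a}) = 0 := by
      intro a
      by_cases hpos : P {ω | α (X ω) = a} = 0
      · exact measure_mono_null Set.inter_subset_right hpos
      have hint := hrates a hpos
      have hNnull : P ({ω | ((u (X ω)):EReal) = t₀ a} ∪ {ω | ((u (X ω)):EReal) = t₁ a}) = 0 :=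
        measure_union_null (hnull _) (hnull _)
      rcases le_total (t₀ a) (t₁ a) with hle | hle
      · refine aux_B P _ _ hNnull _ _ (hτ₀.comp hX : Measurable fun ω => τ₀ (X ω)) (hτ₁.comp hX : Measurable fun ω => τ₁ (X ω))
          (fun ω => h01₀ _) (fun ω => h01₁ _) ?_ hint
        rintro ω ⟨hS, hNmem⟩
        simp only [Set.mem_setOf_eq] at hS
        simp only [Set.mem_union, Set.mem_setOf_eq, not_or] at hNmem
        rcases lt_trichotomy ((u (X ω)):EReal) (t₁ a) with h | h | h
        · rw [(hth₁ (X ω)).2 (by rw [hS]; exact h)]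
          exact (h01₀ (X ω)).1
        · exact absurd h hNmem.2
        · rw [(hth₀ (X ω)).1 (by rw [hS]; exact lt_of_le_of_lt hle h)]
          exact (h01₁ (X ω)).2
      · have := aux_B P {ω | α (X ω) = a} _ hNnull _ _ (hτ₁.comp hX : Measurable fun ω => τ₁ (X ω)) (hτ₀.comp hX : Measurable fun ω => τ₀ (X ω))
          (fun ω => h01₁ _) (fun ω => h01₀ _) ?_ hint.symm
        · refine measure_mono_null ?_ this
          exact Set.inter_subset_inter_left _ fun ω hω => Ne.symm hω
        rintro ω ⟨hS, hNmem⟩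
        simp only [Set.mem_setOf_eq] at hS
        simp only [Set.mem_union, Set.mem_setOf_eq, not_or] at hNmem
        show τ₀ (X ω) ≤ τ₁ (X ω)
        rcases lt_trichotomy ((u (X ω)):EReal) (t₀ a) with h | h | h
        · rw [(hth₀ (X ω)).2 (by rw [hS]; exact h)]
          exact (h01₁ (X ω)).1
        · exact absurd h hNmem.1
        · rw [(hth₁ (X ω)).1 (by rw [hS]; exact lt_of_le_of_lt hle h)]
          exact (h01₀ (X ω)).2
    have hz : P {ω | τ₀ (X ω) ≠ τ₁ (X ω)} = 0 := by
      have hsub : {ω | τ₀ (X ω) ≠ τ₁ (X ω)} ⊆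
          ⋃ a : 𝒜, ({ω | τ₀ (X ω) ≠ τ₁ (X ω)} ∩ {ω | α (X ω) = a}) :=
        fun ω hω => Set.mem_iUnion.2 ⟨α (X ω), hω, rfl⟩
      exact measure_mono_null hsub (measure_iUnion_null key)
    rw [Filter.EventuallyEq, ae_iff]
    simpa using hz
end

section
/- Let 𝒜 be a finite set with at least two elements and suppose Pr(A = a) > 0 for every a ∈ 𝒜. Assume: (1) for every a ∈ 𝒜 and every measurable S ⊆ 𝒳 with Pr(X ∈ S | A = a) > 0, almost surely Pr(X_a ∈ S or A = a | X) > 0; and (2) for every a ∈ 𝒜 and ε > 0 there exists δ > 0 such that for every measurable S with Pr(X ∈ S | A = a) < δ, almost surely Pr(X_a ∈ S and A ≠ a | X) < ε. Then every Π-fair policy d is almost surely constant: there exists p ∈ [0,1] with d(X) = p almost surely. -/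
/-!
Let `a` be the essential infimum of `Z = d(X)`. By condition (2) the event `{d(X_c) < a, A ≠ c}`
has conditional probability below every `ε`, so every counterfactual outcome `d(X_c)` is also
`≥ a` a.s.

If `{Z ≤ a}` is null, pick `t > a` so close to `a` that `{Z < t}` is small inside every group.
Fairness `Z = E[d(X_c) | X]`, a conditional Markov inequality and (2) give `Z > (a + t) / 2` a.s.
on `{A ≠ c}`; so `{Z ≤ (a + t) / 2}` lies in `{A = c}` for two distinct groups `c`, hence is null,
contradicting the choice of `a`.

Otherwise fairness forces `d(X_c) = a` a.s. on the atom `{Z ≤ a}`, and condition (1) then puts the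
atom inside every group `b` for which `{Z > a, A = b}` is not null. Comparing two groups, either
the atom or a whole group would be null, unless `Z ≤ a` a.s.
-/

open MeasureTheory Filter Set Topology

section CondExp

variable {Ω : Type*} {m mΩ : MeasurableSpace Ω} {μ : Measure Ω}

lemma measure_eq_zero_of_forall_ae_condExp_indicator_lt [IsProbabilityMeasure μ] (hm : m ≤ mΩ)
    {K : Set Ω} (hK : MeasurableSet K)
    (h : ∀ ε > 0, ∀ᵐ ω ∂μ, μ[K.indicator (fun _ => (1 : ℝ)) | m] ω < ε) : μ K = 0 := by
  refine (measureReal_eq_zero_iff).1 (le_antisymm (le_of_forall_pos_le_add fun ε hε => ?_)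
    measureReal_nonneg)
  calc μ.real K = ∫ ω, μ[K.indicator (fun _ => (1 : ℝ)) | m] ω ∂μ := by
        rw [integral_condExp hm, integral_indicator_const _ hK, smul_eq_mul, mul_one]
    _ ≤ ∫ _, ε ∂μ :=
        integral_mono_ae integrable_condExp (integrable_const ε) ((h ε hε).mono fun _ => le_of_lt)
    _ = 0 + ε := by simp

variable [IsFiniteMeasure μ]

lemma ae_le_of_ae_le_of_condExp_le (hm : m ≤ mΩ) {f : Ω → ℝ} {a : ℝ} {D : Set Ω}
    (hf : Integrable f μ) (hfa : ∀ᵐ ω ∂μ, a ≤ f ω) (hD : MeasurableSet[m] D)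
    (hcond : ∀ᵐ ω ∂μ, ω ∈ D → μ[f | m] ω ≤ a) : ∀ᵐ ω ∂μ, ω ∈ D → f ω ≤ a := by
  have hD' : MeasurableSet D := hm D hD
  have hnn : 0 ≤ᵐ[μ.restrict D] fun ω => f ω - a :=
    ae_restrict_of_ae (hfa.mono fun _ h => sub_nonneg.2 h)
  have hint : ∫ ω in D, (f ω - a) ∂μ ≤ 0 := by
    calc ∫ ω in D, (f ω - a) ∂μ = ∫ ω in D, (μ[f | m] ω - a) ∂μ := by
          rw [integral_sub hf.integrableOn (integrable_const a),
            integral_sub integrable_condExp.integrableOn (integrable_const a),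
            setIntegral_condExp hm hf hD]
      _ ≤ 0 := integral_nonpos_of_ae <|
          (ae_restrict_iff' hD').2 (hcond.mono fun _ h hD => sub_nonpos.2 (h hD))
  have hzero : (fun ω => f ω - a) =ᵐ[μ.restrict D] 0 :=
    (integral_eq_zero_iff_of_nonneg_ae hnn (hf.sub (integrable_const a)).integrableOn).1
      (le_antisymm hint (integral_nonneg_of_ae hnn))
  exact ((ae_restrict_iff' hD').1 hzero).mono fun _ h hD => sub_nonpos.1 (h hD).le

lemma measure_eq_zero_of_ae_condExp_indicator_pos (hm : m ≤ mΩ) {L G : Set Ω}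
    (hL : MeasurableSet L) (hG : MeasurableSet[m] G) (hLG : μ (G ∩ L) = 0)
    (hpos : ∀ᵐ ω ∂μ, 0 < μ[L.indicator (fun _ => (1 : ℝ)) | m] ω) : μ G = 0 := by
  have hnn : 0 ≤ᵐ[μ.restrict G] μ[L.indicator (fun _ => (1 : ℝ)) | m] :=
    ae_restrict_of_ae (condExp_nonneg (ae_of_all _ (indicator_nonneg fun _ _ => zero_le_one)))
  have hint : ∫ ω in G, μ[L.indicator (fun _ => (1 : ℝ)) | m] ω ∂μ = 0 := by
    rw [setIntegral_condExp hm ((integrable_const 1).indicator hL) hG, setIntegral_indicator hL]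
    simp [Measure.real, hLG]
  have hzero := (integral_eq_zero_iff_of_nonneg_ae hnn integrable_condExp.integrableOn).1 hint
  rw [← Measure.restrict_eq_zero, ← ae_eq_bot, ← empty_mem_iff_bot]
  filter_upwards [hzero, ae_restrict_of_ae hpos] with ω h0 hp
  exact hp.ne' h0

lemma ae_sub_mul_condExp_indicator_le (hm : m ≤ mΩ) {f : Ω → ℝ} {a : ℝ} (t : ℝ)
    (hf : Integrable f μ) (hfm : Measurable f) (hfa : ∀ᵐ ω ∂μ, a ≤ f ω) :
    ∀ᵐ ω ∂μ, t - (t - a) * μ[{ω | f ω < t}.indicator (fun _ => (1 : ℝ)) | m] ω ≤ μ[f | m] ω := by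
  set K := {ω | f ω < t}
  have hK1 : Integrable (K.indicator fun _ => (1 : ℝ)) μ :=
    (integrable_const 1).indicator (hfm measurableSet_Iio)
  have hle : (fun _ => t) - (t - a) • K.indicator (fun _ => (1 : ℝ)) ≤ᵐ[μ] f := by
    filter_upwards [hfa] with ω hω
    by_cases hωK : ω ∈ K
    · simp [hωK, hω]
    · simpa [hωK] using not_lt.1 hωK
  have hcond : μ[(fun _ => t) - (t - a) • K.indicator (fun _ => (1 : ℝ)) | m] =ᵐ[μ]
      (fun _ => t) - (t - a) • μ[K.indicator (fun _ => (1 : ℝ)) | m] := by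
    refine (condExp_sub (integrable_const _) (hK1.smul _) m).trans ?_
    rw [condExp_const hm]
    exact EventuallyEq.rfl.sub (condExp_smul _ _ m)
  filter_upwards [hcond, condExp_mono (m := m) ((integrable_const _).sub (hK1.smul _)) hf hle]
    with ω hω hmono
  simpa [hω] using hmono

lemma ae_lt_condExp_of_ae_condExp_indicator_lt (hm : m ≤ mΩ) {f : Ω → ℝ} {a t ε : ℝ}
    {N : Set Ω} (hf : Integrable f μ) (hfm : Measurable f) (hfa : ∀ᵐ ω ∂μ, a ≤ f ω)
    (hat : a < t) (hN : MeasurableSet[m] N)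
    (hsmall : ∀ᵐ ω ∂μ, μ[({ω | f ω < t} ∩ N).indicator (fun _ => (1 : ℝ)) | m] ω < ε) :
    ∀ᵐ ω ∂μ, ω ∈ N → t - (t - a) * ε < μ[f | m] ω := by
  have hK1 : Integrable ({ω | f ω < t}.indicator fun _ => (1 : ℝ)) μ :=
    (integrable_const 1).indicator (hfm measurableSet_Iio)
  have hN' := condExp_indicator (m := m) hK1 hN
  rw [indicator_indicator, inter_comm] at hN'
  filter_upwards [ae_sub_mul_condExp_indicator_le hm t hf hfm hfa, hN', hsmall]
    with ω hmarkov hNω hε hωN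
  rw [hNω, indicator_of_mem hωN] at hε
  nlinarith

end CondExp

lemma tendsto_measure_setOf_lt_nhdsGT {Ω : Type*} {mΩ : MeasurableSpace Ω} {μ : Measure Ω}
    [IsFiniteMeasure μ] {Z : Ω → ℝ} (hZ : Measurable Z) (a : ℝ) :
    Tendsto (fun t => μ {ω | Z ω < t}) (𝓝[>] a) (𝓝 (μ {ω | Z ω ≤ a})) := by
  have hinter : ⋂ t > a, {ω | Z ω < t} = {ω | Z ω ≤ a} := by
    ext ω
    simp only [mem_iInter]
    exact ⟨fun h => le_of_forall_gt fun t ht => h t ht, fun h t ht => h.trans_lt ht⟩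
  rw [← hinter]
  exact tendsto_measure_biInter_gt (fun t _ => (hZ measurableSet_Iio).nullMeasurableSet)
    (fun s t _ hst ω hω => lt_of_lt_of_le hω hst) ⟨a + 1, by linarith, measure_ne_top _ _⟩

lemma measure_setOf_lt_ne_zero_of_essInf_lt {Ω : Type*} {mΩ : MeasurableSpace Ω}
    {μ : Measure Ω} {Z : Ω → ℝ} (hZ : IsCoboundedUnder (· ≥ ·) (ae μ) Z) {t : ℝ}
    (ht : essInf Z μ < t) : μ {ω | Z ω < t} ≠ 0 := fun h0 =>
  ht.not_ge <| le_essInf_of_ae_le t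
    ((measure_eq_zero_iff_ae_notMem.1 h0).mono fun _ h => not_lt.1 h) hZ

section Counterfactual

variable {Ω 𝒜 : Type*} {m mΩ : MeasurableSpace Ω} {μ : Measure Ω}
  {A : Ω → 𝒜} {Z : Ω → ℝ} {f : 𝒜 → Ω → ℝ} {a : ℝ}

lemma ae_le_counterfactual_of_ae_le [IsProbabilityMeasure μ] (hm : m ≤ mΩ) {c : 𝒜}
    (hA : MeasurableSet[m] {ω | A ω = c}) (hfm : Measurable (f c))
    (hconsist : ∀ᵐ ω ∂μ, A ω = c → f c ω = Z ω) (hZa : ∀ᵐ ω ∂μ, a ≤ Z ω)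
    (hsmall : ∀ ε > 0, ∃ δ > 0, ∀ t,
      μ.real ({ω | Z ω < t} ∩ {ω | A ω = c}) / μ.real {ω | A ω = c} < δ →
      ∀ᵐ ω ∂μ, μ[{ω | f c ω < t ∧ A ω ≠ c}.indicator (fun _ => (1 : ℝ)) | m] ω < ε) :
    ∀ᵐ ω ∂μ, a ≤ f c ω := by
  have hZa' : μ.real ({ω | Z ω < a} ∩ {ω | A ω = c}) = 0 := by
    rw [(measureReal_eq_zero_iff)]
    exact measure_mono_null inter_subset_left (measure_eq_zero_iff_ae_notMem.2
      (hZa.mono fun _ h => not_lt.2 h))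
  have hK : μ {ω | f c ω < a ∧ A ω ≠ c} = 0 := by
    refine measure_eq_zero_of_forall_ae_condExp_indicator_lt hm
      ((hfm measurableSet_Iio).inter (hm _ hA).compl) fun ε hε => ?_
    obtain ⟨δ, hδ, H⟩ := hsmall ε hε
    exact H a (by rwa [hZa', zero_div])
  filter_upwards [measure_eq_zero_iff_ae_notMem.1 hK, hconsist, hZa] with ω hωK hω hZω
  by_cases hc : A ω = c
  · exact (hω hc).symm ▸ hZω
  · exact not_lt.1 fun hlt => hωK ⟨hlt, hc⟩

lemma ae_le_of_measure_le_ne_zero [IsFiniteMeasure μ] [Countable 𝒜] [Nontrivial 𝒜] (hm : m ≤ mΩ)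
    (hA : ∀ c, MeasurableSet[m] {ω | A ω = c}) (hApos : ∀ c, μ {ω | A ω = c} ≠ 0)
    (hZ : Measurable[m] Z) (hf : ∀ c, Integrable (f c) μ) (hfm : ∀ c, Measurable (f c))
    (hfair : ∀ c, μ[f c | m] =ᵐ[μ] Z) (hlb : ∀ c, ∀ᵐ ω ∂μ, a ≤ f c ω)
    (hsupp : ∀ c, 0 < μ ({ω | a < Z ω} ∩ {ω | A ω = c}) →
      ∀ᵐ ω ∂μ, 0 < μ[{ω | a < f c ω ∨ A ω = c}.indicator (fun _ => (1 : ℝ)) | m] ω)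
    (hatom : μ {ω | Z ω ≤ a} ≠ 0) : ∀ᵐ ω ∂μ, Z ω ≤ a := by
  have hD : MeasurableSet[m] {ω | Z ω ≤ a} := hZ measurableSet_Iic
  have hin : ∀ c, μ ({ω | a < Z ω} ∩ {ω | A ω = c}) ≠ 0 → ∀ᵐ ω ∂μ, Z ω ≤ a → A ω = c := by
    intro c hc
    have hfa : ∀ᵐ ω ∂μ, Z ω ≤ a → f c ω ≤ a :=
      ae_le_of_ae_le_of_condExp_le hm (hf c) (hlb c) hD
        ((hfair c).mono fun ω h hω => h.symm ▸ hω)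
    have hnull : μ ({ω | Z ω ≤ a} ∩ {ω | A ω = c}ᶜ) = 0 := by
      refine measure_eq_zero_of_ae_condExp_indicator_pos hm
        (((hfm c) measurableSet_Ioi).union (hm _ (hA c))) (hD.inter (hA c).compl) ?_
        (hsupp c (pos_iff_ne_zero.2 hc))
      refine measure_eq_zero_iff_ae_notMem.2 ?_
      filter_upwards [hfa] with ω hω ⟨⟨hZω, hne⟩, hL⟩
      exact hL.elim (not_lt.2 (hω hZω)) hne
    filter_upwards [measure_eq_zero_iff_ae_notMem.1 hnull] with ω hω hZω
    by_contra hne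
    exact hω ⟨hZω, hne⟩
  by_contra hne
  have hup : μ {ω | a < Z ω} ≠ 0 := by simpa [ae_iff] using hne
  obtain ⟨b, hb⟩ : ∃ b, μ ({ω | a < Z ω} ∩ {ω | A ω = b}) ≠ 0 := by
    by_contra! h
    refine hup (measure_mono_null (fun ω hω => ?_) (measure_iUnion_null h))
    exact mem_iUnion.2 ⟨A ω, hω, rfl⟩
  obtain ⟨c, hcb⟩ := exists_ne b
  by_cases hc : μ ({ω | a < Z ω} ∩ {ω | A ω = c}) = 0
  · refine hApos c (measure_eq_zero_iff_ae_notMem.2 ?_)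
    filter_upwards [measure_eq_zero_iff_ae_notMem.1 hc, hin b hb] with ω hω hωb hωc
    exact hcb (hωc.symm.trans (hωb (not_lt.1 fun h => hω ⟨h, hωc⟩)))
  · refine hatom (measure_eq_zero_iff_ae_notMem.2 ?_)
    filter_upwards [hin b hb, hin c hc] with ω hb' hc' hω
    exact hcb ((hc' hω).symm.trans (hb' hω))

lemma measure_le_ne_zero_of_forall_measure_lt_ne_zero [IsFiniteMeasure μ] [Nontrivial 𝒜]
    (hm : m ≤ mΩ)
    (hA : ∀ c, MeasurableSet[m] {ω | A ω = c}) (hApos : ∀ c, μ {ω | A ω = c} ≠ 0)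
    (hZ : Measurable Z) (hf : ∀ c, Integrable (f c) μ) (hfm : ∀ c, Measurable (f c))
    (hfair : ∀ c, μ[f c | m] =ᵐ[μ] Z) (hlb : ∀ c, ∀ᵐ ω ∂μ, a ≤ f c ω)
    (hsmall : ∀ c, ∀ ε > 0, ∃ δ > 0, ∀ t,
      μ.real ({ω | Z ω < t} ∩ {ω | A ω = c}) / μ.real {ω | A ω = c} < δ →
      ∀ᵐ ω ∂μ, μ[{ω | f c ω < t ∧ A ω ≠ c}.indicator (fun _ => (1 : ℝ)) | m] ω < ε)
    (hinf : ∀ t > a, μ {ω | Z ω < t} ≠ 0) : μ {ω | Z ω ≤ a} ≠ 0 := by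
  intro hatom
  have hgroup : ∀ c, ∀ᶠ t in 𝓝[>] a, ∀ᵐ ω ∂μ, Z ω ≤ (a + t) / 2 → A ω = c := by
    intro c
    obtain ⟨δ, hδ, hδc⟩ := hsmall c (1 / 2) (by norm_num)
    have hAc : 0 < μ.real {ω | A ω = c} := ENNReal.toReal_pos (hApos c) (measure_ne_top _ _)
    have hev : ∀ᶠ t in 𝓝[>] a, μ {ω | Z ω < t} < ENNReal.ofReal (δ * μ.real {ω | A ω = c}) :=
      (tendsto_measure_setOf_lt_nhdsGT hZ a).eventually_lt_const
        (by simpa [hatom] using mul_pos hδ hAc)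
    filter_upwards [hev, self_mem_nhdsWithin] with t ht hat
    have hratio : μ.real ({ω | Z ω < t} ∩ {ω | A ω = c}) / μ.real {ω | A ω = c} < δ := by
      rw [div_lt_iff₀ hAc]
      exact (measureReal_mono inter_subset_left).trans_lt (ENNReal.toReal_lt_of_lt_ofReal ht)
    filter_upwards [ae_lt_condExp_of_ae_condExp_indicator_lt hm (hf c) (hfm c) (hlb c) hat
      (hA c).compl (hδc t hratio), hfair c] with ω hlt hZω hle
    by_contra hne
    have := hlt hne
    rw [hZω] at this
    linarith
  obtain ⟨c₁, c₂, hc⟩ := exists_pair_ne 𝒜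
  obtain ⟨t, ht₁, ht₂, hat⟩ := ((hgroup c₁).and ((hgroup c₂).and self_mem_nhdsWithin)).exists
  refine hinf ((a + t) / 2) (by linarith [show a < t from hat]) (measure_eq_zero_iff_ae_notMem.2 ?_)
  filter_upwards [ht₁, ht₂] with ω h₁ h₂ hω
  exact hc ((h₁ hω.le).symm.trans (h₂ hω.le))

end Counterfactual

/-- (Continuous version of Theorem on path-specific fairness.) Under the two
regularity conditions on the counterfactual covariates, every Π-fair policy is a.s. constant. -/
theorem pi_fair_policy_constant
    {Ω 𝒳 𝒜 : Type*} [MeasurableSpace Ω] [MeasurableSpace 𝒳]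
    [MeasurableSpace 𝒜] [MeasurableSingletonClass 𝒜] [Fintype 𝒜]
    (P : Measure Ω) [IsProbabilityMeasure P]
    (X : Ω → 𝒳) (hX : Measurable X)
    (α : 𝒳 → 𝒜) (hα : Measurable α)
    -- `𝒜` has at least two elements, and every group has positive probability
    (htwo : 1 < Fintype.card 𝒜)
    (hpos : ∀ a : 𝒜, 0 < P {ω | α (X ω) = a})
    -- the counterfactual covariates `X_a`, which agree with `X` on `{A = a}`
    (Xc : 𝒜 → Ω → 𝒳) (hXc : ∀ a, Measurable (Xc a))
    (hconsist : ∀ a : 𝒜, ∀ᵐ ω ∂P, α (X ω) = a → Xc a ω = X ω)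
    -- condition (1)
    (h1 : ∀ a : 𝒜, ∀ S : Set 𝒳, MeasurableSet S →
      0 < P ({ω | X ω ∈ S} ∩ {ω | α (X ω) = a}) →
      ∀ᵐ ω ∂P,
        0 < (P[({ω | Xc a ω ∈ S ∨ α (X ω) = a}).indicator (fun _ => (1 : ℝ)) |
              MeasurableSpace.comap X inferInstance]) ω)
    -- condition (2)
    (h2 : ∀ a : 𝒜, ∀ ε : ℝ, 0 < ε → ∃ δ : ℝ, 0 < δ ∧
      ∀ S : Set 𝒳, MeasurableSet S →
        (P ({ω | X ω ∈ S} ∩ {ω | α (X ω) = a})).toReal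
            / (P {ω | α (X ω) = a}).toReal < δ →
        ∀ᵐ ω ∂P,
          (P[({ω | Xc a ω ∈ S ∧ α (X ω) ≠ a}).indicator (fun _ => (1 : ℝ)) |
              MeasurableSpace.comap X inferInstance]) ω < ε)
    -- `d` is a Π-fair policy (with `W = X`)
    (d : 𝒳 → ℝ) (hd : Measurable d) (hd01 : ∀ x, d x ∈ Set.Icc (0 : ℝ) 1)
    (hfair : ∀ a : 𝒜,
      P[fun ω => d (Xc a ω) | MeasurableSpace.comap X inferInstance]
        =ᵐ[P] fun ω => d (X ω)) :
    ∃ p : ℝ, p ∈ Set.Icc (0 : ℝ) 1 ∧ ∀ᵐ ω ∂P, d (X ω) = p := by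
  have := Fintype.one_lt_card_iff_nontrivial.1 htwo
  have hσ := hX.comap_le
  have hA c : MeasurableSet[MeasurableSpace.comap X inferInstance] {ω | α (X ω) = c} :=
    ⟨α ⁻¹' {c}, hα (measurableSet_singleton c), rfl⟩
  have hApos c := (hpos c).ne'
  have hZ : Measurable[MeasurableSpace.comap X inferInstance] fun ω => d (X ω) :=
    hd.comp (comap_measurable X)
  have hfm c : Measurable fun ω => d (Xc c ω) := hd.comp (hXc c)
  have hf c : Integrable (fun ω => d (Xc c ω)) P :=
    .of_mem_Icc 0 1 (hfm c).aemeasurable (ae_of_all _ fun _ => hd01 _)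
  have hsmall : ∀ c, ∀ ε > 0, ∃ δ > 0, ∀ t : ℝ,
      P.real ({ω | d (X ω) < t} ∩ {ω | α (X ω) = c}) / P.real {ω | α (X ω) = c} < δ →
      ∀ᵐ ω ∂P, P[{ω | d (Xc c ω) < t ∧ α (X ω) ≠ c}.indicator (fun _ => (1 : ℝ)) |
        MeasurableSpace.comap X inferInstance] ω < ε := fun c ε hε =>
    (h2 c ε hε).imp fun _ ⟨hδ, H⟩ => ⟨hδ, fun t => H {x | d x < t} (hd measurableSet_Iio)⟩
  set p := essInf (fun ω => d (X ω)) P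
  have hZp : ∀ᵐ ω ∂P, p ≤ d (X ω) := ae_essInf_le (isBoundedUnder_of ⟨0, fun ω => (hd01 _).1⟩)
  have hlb c : ∀ᵐ ω ∂P, p ≤ d (Xc c ω) :=
    ae_le_counterfactual_of_ae_le (f := fun c ω => d (Xc c ω)) hσ (hA c) (hfm c)
      ((hconsist c).mono fun ω h hc => by rw [h hc]) hZp (hsmall c)
  have hatom := measure_le_ne_zero_of_forall_measure_lt_ne_zero hσ hA hApos (hZ.mono hσ le_rfl)
    hf hfm hfair hlb hsmall fun t => measure_setOf_lt_ne_zero_of_essInf_lt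
      (isCoboundedUnder_ge_of_le _ fun ω => (hd01 _).2)
  have hle := ae_le_of_measure_le_ne_zero hσ hA hApos hZ hf hfm hfair hlb
    (fun c => h1 c _ (hd measurableSet_Ioi)) hatom
  have heq : ∀ᵐ ω ∂P, d (X ω) = p := by
    filter_upwards [hZp, hle] with ω hge hle
    exact le_antisymm hle hge
  obtain ⟨ω, hω⟩ := heq.exists
  exact ⟨p, hω ▸ hd01 (X ω), heq⟩
end

section
/- Let P be an n×n stochastic matrix and let S₁, …, S_m ⊆ {1,…,n} be the recurrent classes of P. If d ∈ ℝⁿ satisfies P d = d, then d takes a constant value p_k on each S_k, for each i the limit lim_{N→∞} Σ_{j∈S_k} (P^N)_{ij} exists for every k, and d_i = Σ_{k=1}^m (lim_{N→∞} Σ_{j∈S_k} (P^N)_{ij}) · p_k for every i. -/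
open Filter



section Aux
variable {n : ℕ} {P : Matrix (Fin n) (Fin n) ℝ}

lemma stoch_pow_nonneg (hP0 : ∀ i j, 0 ≤ P i j) (N : ℕ) (i j : Fin n) :
    0 ≤ (P ^ N) i j := by
  induction N generalizing i j with
  | zero => simp [Matrix.one_apply]; positivity
  | succ N ih =>
    rw [pow_succ, Matrix.mul_apply]
    exact Finset.sum_nonneg fun l _ => mul_nonneg (ih i l) (hP0 l j)

lemma stoch_pow_rowsum (hP1 : ∀ i, ∑ j, P i j = 1) (N : ℕ) (i : Fin n) :
    ∑ j, (P ^ N) i j = 1 := by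
  induction N generalizing i with
  | zero => simp [Matrix.one_apply]
  | succ N ih =>
    simp only [pow_succ, Matrix.mul_apply]
    rw [Finset.sum_comm]
    calc ∑ l, ∑ j, (P ^ N) i l * P l j
        = ∑ l, (P ^ N) i l * ∑ j, P l j := by
          simp [Finset.mul_sum]
      _ = 1 := by simp only [hP1, mul_one]; exact ih i

lemma closed_pow (Q : Finset (Fin n)) (hQ : ∀ i ∈ Q, ∀ j, j ∉ Q → P i j = 0)
    (N : ℕ) : ∀ i ∈ Q, ∀ j, j ∉ Q → (P ^ N) i j = 0 := by
  induction N with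
  | zero =>
    intro i hi j hj
    simp [Matrix.one_apply]
    rintro rfl; exact hj hi
  | succ N ih =>
    intro i hi j hj
    rw [pow_succ, Matrix.mul_apply]
    apply Finset.sum_eq_zero
    intro l _
    by_cases hl : l ∈ Q
    · rw [hQ l hl j hj, mul_zero]
    · rw [ih i hi l hl, zero_mul]

lemma closed_sum_one (hP1 : ∀ i, ∑ j, P i j = 1)
    (Q : Finset (Fin n)) (hQ : ∀ i ∈ Q, ∀ j, j ∉ Q → P i j = 0)
    (N : ℕ) {i : Fin n} (hi : i ∈ Q) : ∑ j ∈ Q, (P ^ N) i j = 1 := by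
  have h := Finset.sum_subset (Finset.subset_univ Q)
    (fun j _ hj => closed_pow Q hQ N i hi j hj)
  rw [h, stoch_pow_rowsum hP1 N i]

lemma closed_sum_mono (hP0 : ∀ i j, 0 ≤ P i j) (hP1 : ∀ i, ∑ j, P i j = 1)
    (Q : Finset (Fin n)) (hQ : ∀ i ∈ Q, ∀ j, j ∉ Q → P i j = 0) (i : Fin n) :
    Monotone (fun N => ∑ j ∈ Q, (P ^ N) i j) := by
  apply monotone_nat_of_le_succ
  intro N
  have key : ∑ j ∈ Q, (P ^ (N+1)) i j = ∑ l, (P ^ N) i l * ∑ j ∈ Q, P l j := by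
    simp only [pow_succ, Matrix.mul_apply, Finset.mul_sum]
    rw [Finset.sum_comm]
  rw [key]
  calc ∑ j ∈ Q, (P ^ N) i j = ∑ l ∈ Q, (P ^ N) i l * ∑ j ∈ Q, P l j := by
        apply Finset.sum_congr rfl
        intro l hl
        have h1 : ∑ j ∈ Q, P l j = 1 := by
          have h := Finset.sum_subset (Finset.subset_univ Q)
            (fun j _ hj => hQ l hl j hj)
          rw [h, hP1 l]
        rw [h1, mul_one]
    _ ≤ ∑ l, (P ^ N) i l * ∑ j ∈ Q, P l j := by
        apply Finset.sum_le_sum_of_subset_of_nonneg (Finset.subset_univ Q)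
        intro l _ _
        exact mul_nonneg (stoch_pow_nonneg hP0 N i l)
          (Finset.sum_nonneg fun j _ => hP0 l j)

end Aux

section Aux2
variable {n : ℕ} {P : Matrix (Fin n) (Fin n) ℝ}

lemma stoch_pow_nonneg' (hP0 : ∀ i j, 0 ≤ P i j) (N : ℕ) (i j : Fin n) :
    0 ≤ (P ^ N) i j := by
  induction N generalizing i j with
  | zero => simp [Matrix.one_apply]; positivity
  | succ N ih =>
    rw [pow_succ, Matrix.mul_apply]
    exact Finset.sum_nonneg fun l _ => mul_nonneg (ih i l) (hP0 l j)

lemma pow_add_entry (hP0 : ∀ i j, 0 ≤ P i j) (a b : ℕ) (i j l : Fin n) :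
    (P ^ a) i j * (P ^ b) j l ≤ (P ^ (a + b)) i l := by
  rw [pow_add, Matrix.mul_apply]
  apply Finset.single_le_sum (f := fun x => (P ^ a) i x * (P ^ b) x l)
    (fun x _ => mul_nonneg (stoch_pow_nonneg' hP0 a i x) (stoch_pow_nonneg' hP0 b x l))
    (Finset.mem_univ j)

open Classical in
noncomputable def Reach (P : Matrix (Fin n) (Fin n) ℝ) (i : Fin n) : Finset (Fin n) :=
  Finset.univ.filter (fun j => ∃ N, 0 < (P ^ N) i j)

lemma mem_Reach {i j : Fin n} : j ∈ Reach P i ↔ ∃ N, 0 < (P ^ N) i j := by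
  classical
  simp [Reach]

lemma self_mem_Reach (i : Fin n) : i ∈ Reach P i :=
  mem_Reach.2 ⟨0, by simp [Matrix.one_apply]⟩

lemma Reach_trans (hP0 : ∀ i j, 0 ≤ P i j) {i j l : Fin n}
    (hj : j ∈ Reach P i) (hl : l ∈ Reach P j) : l ∈ Reach P i := by
  obtain ⟨a, ha⟩ := mem_Reach.1 hj
  obtain ⟨b, hb⟩ := mem_Reach.1 hl
  exact mem_Reach.2 ⟨a + b, lt_of_lt_of_le (mul_pos ha hb) (pow_add_entry hP0 a b i j l)⟩

lemma Reach_subset (hP0 : ∀ i j, 0 ≤ P i j) {i j : Fin n} (hj : j ∈ Reach P i) :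
    Reach P j ⊆ Reach P i := fun _ hl => Reach_trans hP0 hj hl

lemma Reach_closed (hP0 : ∀ i j, 0 ≤ P i j) (i : Fin n) :
    ∀ x ∈ Reach P i, ∀ j, j ∉ Reach P i → P x j = 0 := by
  intro x hx j hj
  by_contra h
  exact hj (Reach_trans hP0 hx (mem_Reach.2 ⟨1, by
    rw [pow_one]; exact lt_of_le_of_ne (hP0 x j) (Ne.symm h)⟩))

/-- From every state one can reach a closed irreducible set. -/
lemma exists_closed_irreducible (hP0 : ∀ i j, 0 ≤ P i j) (hP1 : ∀ i, ∑ j, P i j = 1)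
    (i : Fin n) :
    ∃ j ∈ Reach P i, (Reach P j).Nonempty ∧
      (∀ x ∈ Reach P j, ∀ y, y ∉ Reach P j → P x y = 0) ∧
      (∀ x ∈ Reach P j, ∀ y ∈ Reach P j, ∃ N : ℕ, 1 ≤ N ∧ 0 < (P ^ N) x y) := by
  obtain ⟨j, hj, hmin⟩ := Finset.exists_min_image (Reach P i)
    (fun x => (Reach P x).card) ⟨i, self_mem_Reach i⟩
  have hReq : ∀ x ∈ Reach P j, Reach P x = Reach P j := by
    intro x hx
    exact Finset.eq_of_subset_of_card_le (Reach_subset hP0 hx)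
      (hmin x (Reach_trans hP0 hj hx))
  refine ⟨j, hj, ⟨j, self_mem_Reach j⟩, Reach_closed hP0 j, ?_⟩
  intro x hx y hy
  have hyx : y ∈ Reach P x := by rw [hReq x hx]; exact hy
  obtain ⟨a, ha⟩ := mem_Reach.1 hyx
  rcases Nat.eq_zero_or_pos a with rfl | hapos
  · -- a = 0 : x = y; find a cycle through x
    have hxy : x = y := by
      by_contra hne
      simp [Matrix.one_apply, hne] at ha
    subst hxy
    -- there is l with P x l > 0
    have hex : ∃ l, 0 < P x l := by
      by_contra h
      push_neg at h
      have : ∑ j, P x j = 0 := Finset.sum_eq_zero fun l _ => le_antisymm (h l) (hP0 x l)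
      rw [hP1 x] at this; norm_num at this
    obtain ⟨l, hl⟩ := hex
    have hlx : l ∈ Reach P x := mem_Reach.2 ⟨1, by rwa [pow_one]⟩
    have hlj : l ∈ Reach P j := by rw [← hReq x hx]; exact hlx
    have hxl : x ∈ Reach P l := by rw [hReq l hlj]; exact hx
    obtain ⟨b, hb⟩ := mem_Reach.1 hxl
    refine ⟨1 + b, by omega, ?_⟩
    calc (0:ℝ) < (P ^ 1) x l * (P ^ b) l x := by rw [pow_one]; exact mul_pos hl hb
      _ ≤ (P ^ (1 + b)) x x := pow_add_entry hP0 1 b x l x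
  · exact ⟨a, hapos, ha⟩

end Aux2

section Aux3
variable {n : ℕ} {P : Matrix (Fin n) (Fin n) ℝ}

lemma stoch_pow_nonneg'' (hP0 : ∀ i j, 0 ≤ P i j) (N : ℕ) (i j : Fin n) :
    0 ≤ (P ^ N) i j := by
  induction N generalizing i j with
  | zero => simp [Matrix.one_apply]; positivity
  | succ N ih =>
    rw [pow_succ, Matrix.mul_apply]
    exact Finset.sum_nonneg fun l _ => mul_nonneg (ih i l) (hP0 l j)

lemma pow_mulVec_eq {d : Fin n → ℝ} (hd : P.mulVec d = d) (N : ℕ) :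
    (P ^ N).mulVec d = d := by
  induction N with
  | zero => simp [Matrix.mulVec_one, pow_zero, Matrix.one_mulVec]
  | succ N ih => rw [pow_succ, ← Matrix.mulVec_mulVec, hd, ih]

/-- Maximum principle: a harmonic function is constant on a closed irreducible set. -/
lemma const_on_class (hP0 : ∀ i j, 0 ≤ P i j) (hP1 : ∀ i, ∑ j, P i j = 1)
    (Q : Finset (Fin n)) (hQne : Q.Nonempty)
    (hQc : ∀ i ∈ Q, ∀ j, j ∉ Q → P i j = 0)
    (hQirr : ∀ i ∈ Q, ∀ j ∈ Q, ∃ N : ℕ, 1 ≤ N ∧ 0 < (P ^ N) i j)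
    {d : Fin n → ℝ} (hd : P.mulVec d = d) :
    ∀ i ∈ Q, ∀ j ∈ Q, d i = d j := by
  obtain ⟨i₀, hi₀, hmax⟩ := Finset.exists_max_image Q d hQne
  suffices h : ∀ j ∈ Q, d j = d i₀ by
    intro i hi j hj; rw [h i hi, h j hj]
  intro j hj
  obtain ⟨N, _, hN⟩ := hQirr i₀ hi₀ j hj
  have hdN : ∑ l, (P ^ N) i₀ l * d l = d i₀ := by
    have := congrFun (pow_mulVec_eq hd N) i₀
    simpa [Matrix.mulVec, dotProduct] using this
  have hsum0 : ∑ l ∈ Q, (P ^ N) i₀ l * (d i₀ - d l) = 0 := by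
    have hrow : ∑ l ∈ Q, (P ^ N) i₀ l = 1 := by
      have h := Finset.sum_subset (Finset.subset_univ Q)
        (fun l _ hl => closed_pow Q hQc N i₀ hi₀ l hl)
      rw [h, stoch_pow_rowsum hP1 N i₀]
    have hsuml : ∑ l ∈ Q, (P ^ N) i₀ l * d l = d i₀ := by
      rw [← hdN]
      symm
      apply (Finset.sum_subset (Finset.subset_univ Q) _).symm
      intro l _ hl
      rw [closed_pow Q hQc N i₀ hi₀ l hl, zero_mul]
    simp only [mul_sub, Finset.sum_sub_distrib, ← Finset.sum_mul, hrow, one_mul, hsuml, sub_self]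
  have hterm : (P ^ N) i₀ j * (d i₀ - d j) = 0 := by
    have := (Finset.sum_eq_zero_iff_of_nonneg ?_).1 hsum0 j hj
    · exact this
    · intro l hl
      exact mul_nonneg (stoch_pow_nonneg'' hP0 N i₀ l) (sub_nonneg.2 (hmax l hl))
  have := mul_eq_zero.1 hterm
  rcases this with h | h
  · exact absurd h (ne_of_gt hN)
  · linarith [sub_eq_zero.1 h]

end Aux3

section Aux4
variable {n : ℕ} {P : Matrix (Fin n) (Fin n) ℝ}

lemma transient_to_zero (hP0 : ∀ i j, 0 ≤ P i j) (hP1 : ∀ i, ∑ j, P i j = 1)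
    (R : Finset (Fin n)) (hRc : ∀ i ∈ R, ∀ j, j ∉ R → P i j = 0)
    (hreach : ∀ i, ∃ N, 0 < ∑ j ∈ R, (P ^ N) i j) (i : Fin n) :
    Tendsto (fun N => ∑ j ∈ Finset.univ \ R, (P ^ N) i j) atTop (nhds 0) := by
  haveI : Nonempty (Fin n) := ⟨i⟩
  set t : ℕ → Fin n → ℝ := fun N x => ∑ j ∈ Finset.univ \ R, (P ^ N) x j with ht
  have hsplit : ∀ N x, t N x + ∑ j ∈ R, (P ^ N) x j = 1 := by
    intro N x
    rw [ht]
    simp only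
    rw [Finset.sum_sdiff (Finset.subset_univ R), stoch_pow_rowsum hP1]
  have htnn : ∀ N x, 0 ≤ t N x :=
    fun N x => Finset.sum_nonneg fun j _ => stoch_pow_nonneg hP0 N x j
  have htle : ∀ N x, t N x ≤ 1 := by
    intro N x
    have := hsplit N x
    have h2 : 0 ≤ ∑ j ∈ R, (P ^ N) x j :=
      Finset.sum_nonneg fun j _ => stoch_pow_nonneg hP0 N x j
    linarith
  have htanti : ∀ x, Antitone (fun N => t N x) := by
    intro x a b hab
    have := closed_sum_mono hP0 hP1 R hRc x hab
    have h1 := hsplit a x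
    have h2 := hsplit b x
    simp only at this ⊢
    linarith
  have htR : ∀ N x, x ∈ R → t N x = 0 := by
    intro N x hx
    have := hsplit N x
    rw [closed_sum_one hP1 R hRc N hx] at this
    linarith
  -- choose a uniform time M ≥ 1 by which every state has positive absorbed mass
  obtain ⟨M', hM'⟩ : ∃ M', ∀ x, 0 < ∑ j ∈ R, (P ^ M') x j := by
    choose g hg using hreach
    refine ⟨Finset.univ.sup g, fun x => ?_⟩
    exact lt_of_lt_of_le (hg x)
      (closed_sum_mono hP0 hP1 R hRc x (Finset.le_sup (Finset.mem_univ x)))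
  set M : ℕ := M' + 1 with hM
  have hMpos : ∀ x, 0 < ∑ j ∈ R, (P ^ M) x j := by
    intro x
    exact lt_of_lt_of_le (hM' x) (closed_sum_mono hP0 hP1 R hRc x (by omega))
  -- ε : uniform lower bound
  obtain ⟨x₀, -, hx₀⟩ := Finset.exists_min_image Finset.univ
    (fun x => ∑ j ∈ R, (P ^ M) x j) Finset.univ_nonempty
  set ε : ℝ := ∑ j ∈ R, (P ^ M) x₀ j with hε
  have hεpos : 0 < ε := hMpos x₀
  have htMε : ∀ x, t M x ≤ 1 - ε := by
    intro x
    have h1 := hsplit M x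
    have h2 := hx₀ x (Finset.mem_univ x)
    linarith
  have hgeo : ∀ k x, t (k * M) x ≤ (1 - ε) ^ k := by
    intro k
    induction k with
    | zero => intro x; simpa using htle 0 x
    | succ k ih =>
      intro x
      have hdecomp : t ((k + 1) * M) x = ∑ l, (P ^ M) x l * t (k * M) l := by
        rw [ht]
        simp only
        have : (k + 1) * M = M + k * M := by ring
        rw [this, pow_add]
        simp only [Matrix.mul_apply, Finset.mul_sum]
        rw [Finset.sum_comm]
      rw [hdecomp]
      calc ∑ l, (P ^ M) x l * t (k * M) l
          = ∑ l ∈ Finset.univ \ R, (P ^ M) x l * t (k * M) l := by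
            symm
            apply Finset.sum_subset (Finset.subset_univ _)
            intro l _ hl
            have hlR : l ∈ R := by
              by_contra h
              exact hl (Finset.mem_sdiff.2 ⟨Finset.mem_univ l, h⟩)
            rw [htR (k * M) l hlR, mul_zero]
        _ ≤ ∑ l ∈ Finset.univ \ R, (P ^ M) x l * (1 - ε) ^ k := by
            apply Finset.sum_le_sum
            intro l _
            exact mul_le_mul_of_nonneg_left (ih l) (stoch_pow_nonneg hP0 M x l)
        _ = t M x * (1 - ε) ^ k := by rw [← Finset.sum_mul]
        _ ≤ (1 - ε) * (1 - ε) ^ k := by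
            apply mul_le_mul_of_nonneg_right (htMε x)
            apply pow_nonneg
            linarith [htle M x₀, hsplit M x₀, htnn M x₀,
              Finset.sum_nonneg (fun j (_ : j ∈ Finset.univ \ R) =>
                stoch_pow_nonneg hP0 M x₀ j)]
        _ = (1 - ε) ^ (k + 1) := by ring
  -- conclude
  have hbdd : BddBelow (Set.range fun N => t N i) := ⟨0, by rintro y ⟨N, rfl⟩; exact htnn N i⟩
  have hlim := tendsto_atTop_ciInf (htanti i) hbdd
  have hinf0 : ⨅ N, t N i = 0 := by
    have h1 : 0 ≤ ⨅ N, t N i := le_ciInf fun N => htnn N i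
    have h2 : ∀ k : ℕ, ⨅ N, t N i ≤ (1 - ε) ^ k := fun k =>
      le_trans (ciInf_le hbdd (k * M)) (hgeo k i)
    have habs : |1 - ε| < 1 := by
      rw [abs_lt]
      constructor
      · have := htnn M x₀
        have := hsplit M x₀
        linarith
      · linarith
    have h3 : Tendsto (fun k : ℕ => (1 - ε) ^ k) atTop (nhds 0) :=
      tendsto_pow_atTop_nhds_zero_of_abs_lt_one habs
    have h4 : ⨅ N, t N i ≤ 0 := ge_of_tendsto h3 (Eventually.of_forall h2)
    linarith
  rw [hinf0] at hlim
  exact hlim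
end Aux4

/-- A 1-eigenvector of a finite stochastic matrix is constant on each
recurrent class, the absorption probabilities exist as limits, and the eigenvector is the
corresponding weighted combination of the constant values. -/
theorem stochastic_matrix_one_eigenvector_structure
    {n m : ℕ}
    (P : Matrix (Fin n) (Fin n) ℝ)
    -- `P` is a stochastic matrix
    (hP0 : ∀ i j, 0 ≤ P i j) (hP1 : ∀ i, ∑ j, P i j = 1)
    -- `S 0, …, S (m-1)` are the recurrent classes of `P`
    (S : Fin m → Finset (Fin n))
    (hrec : ∀ k, (S k).Nonempty ∧
      (∀ i ∈ S k, ∀ j, j ∉ S k → P i j = 0) ∧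
      (∀ i ∈ S k, ∀ j ∈ S k, ∃ N : ℕ, 1 ≤ N ∧ 0 < (P ^ N) i j))
    (hinj : Function.Injective S)
    (hall : ∀ T : Finset (Fin n), T.Nonempty →
      (∀ i ∈ T, ∀ j, j ∉ T → P i j = 0) →
      (∀ i ∈ T, ∀ j ∈ T, ∃ N : ℕ, 1 ≤ N ∧ 0 < (P ^ N) i j) →
      ∃ k, T = S k)
    -- `d` is a 1-eigenvector of `P`
    (d : Fin n → ℝ) (hd : P.mulVec d = d) :
    ∃ (p : Fin m → ℝ) (L : Fin n → Fin m → ℝ),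
      (∀ k, ∀ i ∈ S k, d i = p k) ∧
      (∀ i k, Tendsto (fun N : ℕ => ∑ j ∈ S k, (P ^ N) i j) atTop (nhds (L i k))) ∧
      (∀ i, d i = ∑ k, L i k * p k) := by
  classical
  -- the classes are pairwise disjoint
  have hsubset : ∀ k k' (x : Fin n), x ∈ S k → x ∈ S k' → S k ⊆ S k' := by
    intro k k' x hx hx' y hy
    obtain ⟨N, _, hN⟩ := (hrec k).2.2 x hx y hy
    by_contra hyk'
    rw [closed_pow (S k') (hrec k').2.1 N x hx' y hyk'] at hN
    exact lt_irrefl 0 hN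
  have hdisj : ∀ k k', k ≠ k' → Disjoint (S k) (S k') := by
    intro k k' hkk'
    rw [Finset.disjoint_left]
    intro x hx hx'
    exact hkk' (hinj (Finset.Subset.antisymm (hsubset k k' x hx hx')
      (hsubset k' k x hx' hx)))
  -- the union of recurrent classes
  set R : Finset (Fin n) := Finset.univ.biUnion S with hR
  have hRc : ∀ i ∈ R, ∀ j, j ∉ R → P i j = 0 := by
    intro i hi j hj
    obtain ⟨k, -, hk⟩ := Finset.mem_biUnion.1 hi
    apply (hrec k).2.1 i hk j
    intro hjk
    exact hj (Finset.mem_biUnion.2 ⟨k, Finset.mem_univ k, hjk⟩)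
  have hreach : ∀ i, ∃ N, 0 < ∑ j ∈ R, (P ^ N) i j := by
    intro i
    obtain ⟨j, hj, hne, hc, hirr⟩ := exists_closed_irreducible hP0 hP1 i
    obtain ⟨k, hk⟩ := hall (Reach P j) hne hc hirr
    obtain ⟨N, hN⟩ := mem_Reach.1 hj
    refine ⟨N, lt_of_lt_of_le hN ?_⟩
    apply Finset.single_le_sum (f := fun j' => (P ^ N) i j')
      (fun x _ => stoch_pow_nonneg hP0 N i x)
    apply Finset.mem_biUnion.2 ⟨k, Finset.mem_univ k, ?_⟩
    rw [← hk]
    exact self_mem_Reach j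
  -- defining p and L
  set p : Fin m → ℝ := fun k => d (hrec k).1.choose with hp
  set L : Fin n → Fin m → ℝ := fun i k => ⨆ N : ℕ, ∑ j ∈ S k, (P ^ N) i j with hL
  have hmono : ∀ i k, Monotone (fun N => ∑ j ∈ S k, (P ^ N) i j) :=
    fun i k => closed_sum_mono hP0 hP1 (S k) (hrec k).2.1 i
  have hbdd : ∀ i k, BddAbove (Set.range fun N => ∑ j ∈ S k, (P ^ N) i j) := by
    intro i k
    refine ⟨1, ?_⟩
    rintro y ⟨N, rfl⟩
    calc ∑ j ∈ S k, (P ^ N) i j ≤ ∑ j, (P ^ N) i j :=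
          Finset.sum_le_sum_of_subset_of_nonneg (Finset.subset_univ _)
            (fun j _ _ => stoch_pow_nonneg hP0 N i j)
      _ = 1 := stoch_pow_rowsum hP1 N i
  have claim1 : ∀ k, ∀ i ∈ S k, d i = p k := by
    intro k i hi
    exact const_on_class hP0 hP1 (S k) (hrec k).1 (hrec k).2.1 (hrec k).2.2 hd
      i hi _ (hrec k).1.choose_spec
  have claim2 : ∀ i k, Tendsto (fun N : ℕ => ∑ j ∈ S k, (P ^ N) i j) atTop (nhds (L i k)) :=
    fun i k => tendsto_atTop_ciSup (hmono i k) (hbdd i k)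
  refine ⟨p, L, claim1, claim2, ?_⟩
  intro i
  set F : ℕ → ℝ := fun N => ∑ k, (∑ j ∈ S k, (P ^ N) i j) * p k with hF
  set G : ℕ → ℝ := fun N => ∑ j ∈ Finset.univ \ R, (P ^ N) i j * d j with hG
  have hFG : ∀ N, F N + G N = d i := by
    intro N
    have h0 : ∑ j, (P ^ N) i j * d j = d i := by
      have := congrFun (pow_mulVec_eq hd N) i
      simpa [Matrix.mulVec, dotProduct] using this
    have h1 : ∑ j ∈ R, (P ^ N) i j * d j = F N := by
      rw [hR, Finset.sum_biUnion (fun k _ k' _ hkk' => hdisj k k' hkk')]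
      apply Finset.sum_congr rfl
      intro k _
      rw [Finset.sum_mul]
      apply Finset.sum_congr rfl
      intro j hj
      rw [claim1 k j hj]
    have h2 := Finset.sum_sdiff (f := fun j => (P ^ N) i j * d j) (Finset.subset_univ R)
    rw [hF, hG]
    simp only
    rw [h1] at h2
    linarith [h2, h0]
  have hFlim : Tendsto F atTop (nhds (∑ k, L i k * p k)) :=
    tendsto_finset_sum _ (fun k _ => (claim2 i k).mul_const (p k))
  have hGlim : Tendsto G atTop (nhds 0) := by
    set C : ℝ := ∑ j, |d j| with hC
    have hCnn : ∀ j, |d j| ≤ C :=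
      fun j => Finset.single_le_sum (fun x _ => abs_nonneg (d x)) (Finset.mem_univ j)
    apply squeeze_zero_norm (a := fun N => (∑ j ∈ Finset.univ \ R, (P ^ N) i j) * C)
    · intro N
      calc ‖G N‖ ≤ ∑ j ∈ Finset.univ \ R, ‖(P ^ N) i j * d j‖ := norm_sum_le _ _
        _ ≤ ∑ j ∈ Finset.univ \ R, (P ^ N) i j * C := by
            apply Finset.sum_le_sum
            intro j _
            rw [norm_mul, Real.norm_eq_abs, Real.norm_eq_abs,
              abs_of_nonneg (stoch_pow_nonneg hP0 N i j)]
            exact mul_le_mul_of_nonneg_left (hCnn j) (stoch_pow_nonneg hP0 N i j)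
        _ = (∑ j ∈ Finset.univ \ R, (P ^ N) i j) * C := by rw [Finset.sum_mul]
    · have := (transient_to_zero hP0 hP1 R hRc hreach i).mul_const C
      simpa using this
  have hsum := hFlim.add hGlim
  rw [add_zero] at hsum
  have heq : (fun N => F N + G N) = fun _ => d i := funext hFG
  rw [heq] at hsum
  exact (tendsto_nhds_unique hsum tendsto_const_nhds).symm
end

section
/- Suppose 𝒳 = {x₁, …, x_n} is finite, and for each a' ∈ 𝒜 let P_{a'} be the n×n stochastic matrix with entries (P_{a'})_{ij} = Pr(X_{a'} = x_j | X = x_i). Let P = (1/|𝒜|) Σ_{a'∈𝒜} P_{a'}. If d : 𝒳 → [0,1] is a Π-fair policy (equivalently, P_{a'} d = d for every a' ∈ 𝒜, viewing d as the vector (d(x_i))_i), then d is constant on every recurrent class of P. -/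
/-
Π-fairness makes `d` a fixed vector of every counterfactual transition matrix: integrating
`E[d(X_{a'}) | X] = d(X)` over the atom `{X = x}` gives `(P_{a'} d)(x) = d(x)`. Hence `d` is a fixed
vector of the stochastic average `M` and of all its powers. A fixed vector of a stochastic matrix
obeys the maximum principle on a closed class: if `x₀` maximises `d` on the class and
`(M^N)(x₀, x) > 0`, the average `d(x₀) = Σ_y (M^N)(x₀, y) d(y)` forces `d(x) = d(x₀)`; by
irreducibility every state of the class is reached from `x₀`.
-/

open MeasureTheory Matrix

namespace Matrix

variable {n ι R : Type*} [Fintype n]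

theorem inv_card_smul_sum_mulVec_eq [Fintype ι] [Nonempty ι] [Field R] [CharZero R]
    {A : ι → Matrix n n R} {v : n → R} (hA : ∀ a, A a *ᵥ v = v) :
    ((Fintype.card ι : R)⁻¹ • ∑ a, A a) *ᵥ v = v := by
  rw [smul_mulVec, sum_mulVec]
  simp only [hA, Finset.sum_const, Finset.card_univ]
  rw [← Nat.cast_smul_eq_nsmul R, smul_smul, inv_mul_cancel₀ (by simp), one_smul]

variable [DecidableEq n]

theorem inv_card_smul_sum_mem_rowStochastic [Fintype ι] [Nonempty ι] [Field R] [LinearOrder R]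
    [IsStrictOrderedRing R] {A : ι → Matrix n n R} (hA : ∀ a, A a ∈ rowStochastic R n) :
    (Fintype.card ι : R)⁻¹ • ∑ a, A a ∈ rowStochastic R n := by
  rw [Finset.smul_sum]
  refine convex_rowStochastic.sum_mem (fun _ _ => by positivity) ?_ fun a _ => hA a
  rw [Finset.sum_const, Finset.card_univ, nsmul_eq_mul, mul_inv_cancel₀ (by positivity)]

theorem pow_mulVec_eq_self [Semiring R] {M : Matrix n n R} {v : n → R} (hv : M *ᵥ v = v)
    (N : ℕ) : (M ^ N) *ᵥ v = v := by
  induction N with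
  | zero => exact one_mulVec v
  | succ N ih => rw [pow_succ, ← mulVec_mulVec, hv, ih]

theorem pow_apply_eq_zero_of_closed [Semiring R] {M : Matrix n n R} {T : Set n}
    (hT : ∀ i ∈ T, ∀ j ∉ T, M i j = 0) (N : ℕ) : ∀ i ∈ T, ∀ j ∉ T, (M ^ N) i j = 0 := by
  induction N with
  | zero => exact fun i hi j hj => one_apply_ne (by rintro rfl; exact hj hi)
  | succ N ih =>
    intro i hi j hj
    rw [pow_succ', mul_apply]
    refine Finset.sum_eq_zero fun k _ => ?_
    by_cases hk : k ∈ T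
    · rw [ih k hk j hj, mul_zero]
    · rw [hT i hi k hk, zero_mul]

variable [Ring R] [LinearOrder R] [IsStrictOrderedRing R]

theorem apply_eq_of_isMaxOn_of_mem_rowStochastic {M : Matrix n n R} {v : n → R} {T : Set n}
    (hM : M ∈ rowStochastic R n) (hv : M *ᵥ v = v) (hT : ∀ i ∈ T, ∀ j ∉ T, M i j = 0)
    {i j : n} (hi : i ∈ T) (hmax : IsMaxOn v T i) (hij : 0 < M i j) : v j = v i := by
  have hsum : ∑ k, M i k * (v i - v k) = 0 := by
    simp only [mul_sub, Finset.sum_sub_distrib, ← Finset.sum_mul,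
      sum_row_of_mem_rowStochastic hM, one_mul]
    exact sub_eq_zero.mpr (congrFun hv i).symm
  have hterm : ∀ k ∈ Finset.univ, 0 ≤ M i k * (v i - v k) := by
    intro k _
    by_cases hk : k ∈ T
    · exact mul_nonneg (nonneg_of_mem_rowStochastic hM) (sub_nonneg.mpr (hmax hk))
    · rw [hT i hi k hk, zero_mul]
  have hj := (Finset.sum_eq_zero_iff_of_nonneg hterm).mp hsum j (Finset.mem_univ j)
  exact (sub_eq_zero.mp ((mul_eq_zero.mp hj).resolve_left hij.ne')).symm

theorem eq_on_closed_irreducible_of_mulVec_eq_self {M : Matrix n n R} {v : n → R} {T : Set n}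
    (hM : M ∈ rowStochastic R n) (hv : M *ᵥ v = v) (hT : ∀ i ∈ T, ∀ j ∉ T, M i j = 0)
    (hirr : ∀ i ∈ T, ∀ j ∈ T, ∃ N : ℕ, 0 < (M ^ N) i j) : ∀ i ∈ T, ∀ j ∈ T, v i = v j := by
  intro i hi j hj
  obtain ⟨k, hk, hmax⟩ := Set.exists_max_image T v T.toFinite ⟨i, hi⟩
  have eq_max : ∀ l ∈ T, v l = v k := fun l hl => by
    obtain ⟨N, hN⟩ := hirr k hk l hl
    exact apply_eq_of_isMaxOn_of_mem_rowStochastic (pow_mem hM N) (pow_mulVec_eq_self hv N)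
      (pow_apply_eq_zero_of_closed hT N) hk (isMaxOn_iff.mpr hmax) hN
  rw [eq_max i hi, eq_max j hj]


end Matrix

section transitionMatrix

variable {Ω α : Type*} [MeasurableSpace Ω] [Fintype α] [MeasurableSpace α]
  [MeasurableSingletonClass α]

/-- Entry `(x, y)` is `P(Y = y | X = x)`; the row of an `x` with `P(X = x) = 0` is zero. -/
noncomputable def transitionMatrix (P : Measure Ω) (X Y : Ω → α) : Matrix α α ℝ :=
  fun x y => P.real (Y ⁻¹' {y} ∩ X ⁻¹' {x}) / P.real (X ⁻¹' {x})

variable {P : Measure Ω} [IsFiniteMeasure P] {X Y : Ω → α}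

theorem setIntegral_comp_eq_sum (hY : Measurable Y) (S : Set Ω) (f : α → ℝ) :
    ∫ ω in S, f (Y ω) ∂P = ∑ y, P.real (Y ⁻¹' {y} ∩ S) * f y := by
  rw [← integral_map hY.aemeasurable (measurable_of_finite f).aestronglyMeasurable,
    integral_fintype .of_finite]
  simp only [map_measureReal_apply hY (measurableSet_singleton _),
    measureReal_restrict_apply (hY (measurableSet_singleton _)), smul_eq_mul]

theorem transitionMatrix_mulVec_apply (hY : Measurable Y) (f : α → ℝ) (x : α) :
    (transitionMatrix P X Y *ᵥ f) x = (∫ ω in X ⁻¹' {x}, f (Y ω) ∂P) / P.real (X ⁻¹' {x}) := by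
  simp only [setIntegral_comp_eq_sum hY, mulVec, dotProduct, transitionMatrix, Finset.sum_div,
    div_mul_eq_mul_div]

theorem transitionMatrix_mem_rowStochastic [DecidableEq α] (hY : Measurable Y)
    (hpos : ∀ x, 0 < P (X ⁻¹' {x})) :
    transitionMatrix P X Y ∈ rowStochastic ℝ α := by
  refine ⟨fun x y => by unfold transitionMatrix; positivity, funext fun x => ?_⟩
  simp only [transitionMatrix_mulVec_apply hY, Pi.one_apply, setIntegral_const, smul_eq_mul,
    mul_one]
  exact div_self (ENNReal.toReal_pos (hpos x).ne' (measure_ne_top P _)).ne'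

theorem transitionMatrix_mulVec_eq_of_condExp (hX : Measurable X) (hY : Measurable Y)
    (hpos : ∀ x, 0 < P (X ⁻¹' {x})) (f : α → ℝ)
    (hf : P[fun ω => f (Y ω) | MeasurableSpace.comap X inferInstance] =ᵐ[P] fun ω => f (X ω)) :
    transitionMatrix P X Y *ᵥ f = f := by
  funext x
  have hS : MeasurableSet[MeasurableSpace.comap X inferInstance] (X ⁻¹' {x}) :=
    ⟨{x}, measurableSet_singleton x, rfl⟩
  have hPS : P.real (X ⁻¹' {x}) ≠ 0 := (ENNReal.toReal_pos (hpos x).ne' (measure_ne_top P _)).ne'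
  calc (transitionMatrix P X Y *ᵥ f) x
      = (∫ ω in X ⁻¹' {x}, f (Y ω) ∂P) / P.real (X ⁻¹' {x}) :=
        transitionMatrix_mulVec_apply hY f x
    _ = (∫ ω in X ⁻¹' {x}, (P[fun ω => f (Y ω) | MeasurableSpace.comap X inferInstance]) ω ∂P)
          / P.real (X ⁻¹' {x}) := by
        have hint : Integrable (fun ω => f (Y ω)) P := Integrable.of_finite.comp_measurable hY
        rw [setIntegral_condExp hX.comap_le hint hS]
    _ = (∫ ω in X ⁻¹' {x}, f x ∂P) / P.real (X ⁻¹' {x}) := by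
        rw [integral_congr_ae (ae_restrict_of_ae hf),
          setIntegral_congr_fun (hX (measurableSet_singleton x)) fun ω hω => congrArg f hω]
    _ = f x := by rw [setIntegral_const, smul_eq_mul, mul_div_cancel_left₀ _ hPS]

end transitionMatrix

theorem pi_fair_constant_on_recurrent_classes_general
    {Ω 𝒳 𝒜 : Type*} [MeasurableSpace Ω]
    [Fintype 𝒳] [DecidableEq 𝒳] [MeasurableSpace 𝒳] [MeasurableSingletonClass 𝒳]
    [Fintype 𝒜] [Nonempty 𝒜]
    (P : Measure Ω) [IsProbabilityMeasure P]
    (X : Ω → 𝒳) (hX : Measurable X) (hXpos : ∀ x : 𝒳, 0 < P {ω | X ω = x})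
    -- counterfactual covariates
    (Xc : 𝒜 → Ω → 𝒳) (hXc : ∀ a', Measurable (Xc a'))
    -- `d` is a Π-fair policy (with `W = X`); equivalently `Pa a' *ᵥ d = d` for all `a'`
    (d : 𝒳 → ℝ)
    (hfair : ∀ a' : 𝒜,
      P[fun ω => d (Xc a' ω) | MeasurableSpace.comap X inferInstance]
        =ᵐ[P] fun ω => d (X ω))
    -- the counterfactual transition matrices
    (Pa : 𝒜 → Matrix 𝒳 𝒳 ℝ)
    (hPa : ∀ (a' : 𝒜) (x x' : 𝒳), Pa a' x x'
      = (P ({ω | Xc a' ω = x'} ∩ {ω | X ω = x})).toReal / (P {ω | X ω = x}).toReal)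
    -- and their average
    (M : Matrix 𝒳 𝒳 ℝ)
    (hM : M = (Fintype.card 𝒜 : ℝ)⁻¹ • ∑ a' : 𝒜, Pa a')
    -- `T` is a recurrent class of `M`
    (T : Finset 𝒳)
    (hclosed : ∀ x ∈ T, ∀ x', x' ∉ T → M x x' = 0)
    (hirred : ∀ x ∈ T, ∀ x' ∈ T, ∃ N : ℕ, 1 ≤ N ∧ 0 < (M ^ N) x x') :
    -- then `d` is constant on `T`
    ∀ x ∈ T, ∀ x' ∈ T, d x = d x' := by
  have hPa' : ∀ a', Pa a' = transitionMatrix P X (Xc a') := fun a' => Matrix.ext (hPa a')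
  have hstoch : M ∈ rowStochastic ℝ 𝒳 := hM ▸ inv_card_smul_sum_mem_rowStochastic fun a' =>
    hPa' a' ▸ transitionMatrix_mem_rowStochastic (hXc a') hXpos
  have hfix : M *ᵥ d = d := hM ▸ inv_card_smul_sum_mulVec_eq fun a' =>
    hPa' a' ▸ transitionMatrix_mulVec_eq_of_condExp hX (hXc a') hXpos d (hfair a')
  exact eq_on_closed_irreducible_of_mulVec_eq_self hstoch hfix hclosed fun x hx x' hx' =>
    (hirred x hx x' hx').imp fun _ => And.right

/-- A Π-fair policy is constant on every recurrent class of the averaged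
counterfactual transition matrix. -/
theorem pi_fair_constant_on_recurrent_classes
    {Ω 𝒳 𝒜 : Type*} [MeasurableSpace Ω]
    [Fintype 𝒳] [DecidableEq 𝒳] [MeasurableSpace 𝒳] [MeasurableSingletonClass 𝒳]
    [Fintype 𝒜] [Nonempty 𝒜]
    (P : Measure Ω) [IsProbabilityMeasure P]
    (X : Ω → 𝒳) (hX : Measurable X) (hXpos : ∀ x : 𝒳, 0 < P {ω | X ω = x})
    -- counterfactual covariates
    (Xc : 𝒜 → Ω → 𝒳) (hXc : ∀ a', Measurable (Xc a'))
    -- `d` is a Π-fair policy (with `W = X`); equivalently `Pa a' *ᵥ d = d` for all `a'`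
    (d : 𝒳 → ℝ) (hd01 : ∀ x, d x ∈ Set.Icc (0 : ℝ) 1)
    (hfair : ∀ a' : 𝒜,
      P[fun ω => d (Xc a' ω) | MeasurableSpace.comap X inferInstance]
        =ᵐ[P] fun ω => d (X ω))
    -- the counterfactual transition matrices
    (Pa : 𝒜 → Matrix 𝒳 𝒳 ℝ)
    (hPa : ∀ (a' : 𝒜) (x x' : 𝒳), Pa a' x x'
      = (P ({ω | Xc a' ω = x'} ∩ {ω | X ω = x})).toReal / (P {ω | X ω = x}).toReal)
    -- and their average
    (M : Matrix 𝒳 𝒳 ℝ)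
    (hM : M = (Fintype.card 𝒜 : ℝ)⁻¹ • ∑ a' : 𝒜, Pa a')
    -- `T` is a recurrent class of `M`
    (T : Finset 𝒳) (hTne : T.Nonempty)
    (hclosed : ∀ x ∈ T, ∀ x', x' ∉ T → M x x' = 0)
    (hirred : ∀ x ∈ T, ∀ x' ∈ T, ∃ N : ℕ, 1 ≤ N ∧ 0 < (M ^ N) x x') :
    -- then `d` is constant on `T`
    ∀ x ∈ T, ∀ x' ∈ T, d x = d x' :=
  pi_fair_constant_on_recurrent_classes_general P X hX hXpos Xc hXc d hfair Pa hPa M hM T hclosed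
    hirred
end

section
/- Let μ and μ' be finite measures on a measurable space (V, ℳ), let ℱ ⊆ ℳ be a sub-σ-algebra, and let f be a measurable function with |f(v)| ≤ C for all v ∈ V. Let g be an ℱ-measurable function with |g(v)| ≤ C for all v ∈ V such that g is a version of the conditional expectation E_{μ'}[f | ℱ] (i.e., ∫_E g dμ' = ∫_E f dμ' for all E ∈ ℱ). Then ∫_V |E_μ[f | ℱ] − g| dμ ≤ 4C · |μ − μ'|(V), where |μ − μ'| denotes the total variation measure of the signed measure μ − μ'. -/
open MeasureTheory

lemma bounded_integrable' {V : Type*} {m0 : MeasurableSpace V}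
    (μ : Measure V) [IsFiniteMeasure μ] {φ : V → ℝ} (hφ : Measurable φ)
    {C : ℝ} (hC : ∀ v, |φ v| ≤ C) : Integrable φ μ :=
  ⟨hφ.aestronglyMeasurable, HasFiniteIntegral.of_bounded (C := C)
    (ae_of_all _ fun v => by rw [Real.norm_eq_abs]; exact hC v)⟩

lemma setIntegral_diff_le_tv {V : Type*} {m0 : MeasurableSpace V}
    (μ μ' : Measure V) [IsFiniteMeasure μ] [IsFiniteMeasure μ']
    {φ : V → ℝ} (hφ : Measurable φ) {C : ℝ} (hC : ∀ v, |φ v| ≤ C) (hC0 : 0 ≤ C)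
    {E : Set V} (hE : MeasurableSet E) :
    |∫ v in E, φ v ∂μ - ∫ v in E, φ v ∂μ'|
      ≤ C * ((μ.toSignedMeasure - μ'.toSignedMeasure).totalVariation Set.univ).toReal := by
  set s := μ.toSignedMeasure - μ'.toSignedMeasure with hs
  set π := s.toJordanDecomposition.posPart
  set ν := s.toJordanDecomposition.negPart
  have hmeq : μ + ν = μ' + π := by
    rw [← Measure.toSignedMeasure_eq_toSignedMeasure_iff,
      Measure.toSignedMeasure_add, Measure.toSignedMeasure_add]
    have h1 : π.toSignedMeasure - ν.toSignedMeasure = s := by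
      have := s.toSignedMeasure_toJordanDecomposition
      rwa [JordanDecomposition.toSignedMeasure] at this
    have h3 := sub_eq_sub_iff_add_eq_add.mp (h1.trans hs)
    exact h3.symm.trans (add_comm _ _)
  have hint : ∀ (τ : Measure V) [IsFiniteMeasure τ], Integrable φ (τ.restrict E) :=
    fun τ _ => bounded_integrable' _ hφ hC
  have hadd : ∫ v in E, φ v ∂μ + ∫ v in E, φ v ∂ν
      = ∫ v in E, φ v ∂μ' + ∫ v in E, φ v ∂π := by
    rw [← integral_add_measure (hint μ) (hint ν), ← integral_add_measure (hint μ') (hint π),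
      ← Measure.restrict_add, ← Measure.restrict_add, hmeq]
  have key : ∫ v in E, φ v ∂μ - ∫ v in E, φ v ∂μ' = ∫ v in E, φ v ∂π - ∫ v in E, φ v ∂ν := by
    linarith
  have hbound : ∀ (τ : Measure V) [IsFiniteMeasure τ],
      |∫ v in E, φ v ∂τ| ≤ C * (τ Set.univ).toReal := by
    intro τ _
    calc |∫ v in E, φ v ∂τ| ≤ C * (τ.restrict E Set.univ).toReal := by
          rw [← Real.norm_eq_abs]
          exact norm_integral_le_of_norm_le_const
            (ae_of_all _ fun v => by rw [Real.norm_eq_abs]; exact hC v)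
      _ ≤ C * (τ Set.univ).toReal := by
          gcongr
          · exact measure_ne_top _ _
          · exact Measure.restrict_le_self
  have htv : (s.totalVariation Set.univ).toReal
      = (π Set.univ).toReal + (ν Set.univ).toReal := by
    rw [SignedMeasure.totalVariation, Measure.add_apply,
      ENNReal.toReal_add (measure_ne_top _ _) (measure_ne_top _ _)]
  rw [key, htv]
  calc |∫ v in E, φ v ∂π - ∫ v in E, φ v ∂ν| ≤ |∫ v in E, φ v ∂π| + |∫ v in E, φ v ∂ν| :=
        abs_sub _ _
    _ ≤ C * (π Set.univ).toReal + C * (ν Set.univ).toReal := add_le_add (hbound π) (hbound ν)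
    _ = C * ((π Set.univ).toReal + (ν Set.univ).toReal) := by ring

/-- A bound on the difference between conditional expectations of a bounded
function with respect to two finite measures, in terms of the total variation distance of the
measures. -/
theorem condexp_diff_totalVariation_bound
    {V : Type*} (ℱ : MeasurableSpace V) {m0 : MeasurableSpace V}
    (μ μ' : Measure V) [IsFiniteMeasure μ] [IsFiniteMeasure μ']
    (hℱ : ℱ ≤ m0)
    (f g : V → ℝ) (hf : Measurable f)
    (C : ℝ)
    (hfC : ∀ v, |f v| ≤ C) (hgC : ∀ v, |g v| ≤ C)
    -- `g` is an `ℱ`-measurable (standard) version of `E_{μ'}[f | ℱ]`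
    (hgmeas : @Measurable V ℝ ℱ _ g)
    (hgce : ∀ E : Set V, @MeasurableSet V ℱ E → ∫ v in E, g v ∂μ' = ∫ v in E, f v ∂μ') :
    ∫ v, |(μ[f|ℱ]) v - g v| ∂μ
      ≤ 4 * C * (@SignedMeasure.totalVariation V m0
          ((@Measure.toSignedMeasure V m0 μ _) - (@Measure.toSignedMeasure V m0 μ' _))
          Set.univ).toReal := by
  rcases isEmpty_or_nonempty V with hV | hV
  · have h1 : ∫ v, |(μ[f|ℱ]) v - g v| ∂μ = 0 := by
      have : μ = 0 := Measure.measure_univ_eq_zero.mp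
        (by rw [Set.univ_eq_empty_iff.mpr hV]; exact measure_empty)
      rw [this]; simp
    have h2 : (@SignedMeasure.totalVariation V m0
          ((@Measure.toSignedMeasure V m0 μ _) - (@Measure.toSignedMeasure V m0 μ' _))
          Set.univ) = 0 := by
      rw [Set.univ_eq_empty_iff.mpr hV]
      exact measure_empty
    rw [h1, h2]; simp
  have hC0 : 0 ≤ C := le_trans (abs_nonneg _) (hfC (Classical.arbitrary V))
  set TV := (@SignedMeasure.totalVariation V m0
          ((@Measure.toSignedMeasure V m0 μ _) - (@Measure.toSignedMeasure V m0 μ' _))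
          Set.univ).toReal with hTV
  letI : MeasurableSpace V := m0
  have hgm0 : @Measurable V ℝ m0 _ g := hgmeas.mono hℱ le_rfl
  have hfm0 : @Measurable V ℝ m0 _ f := hf
  have hfint : Integrable f μ := bounded_integrable' μ hfm0 hfC
  have hgint : Integrable g μ := bounded_integrable' μ hgm0 hgC
  set h : V → ℝ := fun v => (μ[f|ℱ]) v - g v with hh
  have hcem : @Measurable V ℝ ℱ _ (μ[f|ℱ]) :=
    (stronglyMeasurable_condExp (m := ℱ)).measurable
  have hhm : @Measurable V ℝ ℱ _ h := hcem.sub hgmeas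
  have hhint : Integrable h μ := integrable_condExp.sub hgint
  set E : Set V := {v | 0 ≤ h v} with hE
  have hEmF : MeasurableSet[ℱ] E := hhm measurableSet_Ici
  have hEm : MeasurableSet[m0] E := hℱ _ hEmF
  have hset : ∀ (F : Set V), MeasurableSet[ℱ] F → |∫ v in F, h v ∂μ| ≤ 2 * C * TV := by
    intro F hFm
    have hFm0 : MeasurableSet[m0] F := hℱ _ hFm
    have h1 : ∫ v in F, h v ∂μ = ∫ v in F, (μ[f|ℱ]) v ∂μ - ∫ v in F, g v ∂μ :=
      integral_sub integrable_condExp.integrableOn hgint.integrableOn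
    have h2 : ∫ v in F, (μ[f|ℱ]) v ∂μ = ∫ v in F, f v ∂μ :=
      setIntegral_condExp hℱ hfint hFm
    have h3 := abs_le.mp (setIntegral_diff_le_tv μ μ' hfm0 hfC hC0 hFm0)
    have h4 := abs_le.mp (setIntegral_diff_le_tv μ μ' hgm0 hgC hC0 hFm0)
    have h5 : ∫ v in F, g v ∂μ' = ∫ v in F, f v ∂μ' := hgce F hFm
    rw [h1, h2, abs_le]
    constructor <;> [linarith [h3.1, h4.2]; linarith [h3.2, h4.1]]
  have hsplit : ∫ v, |h v| ∂μ = ∫ v in E, h v ∂μ + ∫ v in Eᶜ, -h v ∂μ := by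
    rw [← integral_add_compl hEm hhint.abs]
    congr 1
    · exact setIntegral_congr_fun hEm fun x hx => abs_of_nonneg hx
    · exact setIntegral_congr_fun hEm.compl fun x hx => abs_of_neg (lt_of_not_ge hx)
  have hneg : ∫ v in Eᶜ, -h v ∂μ = -∫ v in Eᶜ, h v ∂μ := integral_neg h
  have hEb := abs_le.mp (hset E hEmF)
  have hEcb := abs_le.mp (hset Eᶜ hEmF.compl)
  calc ∫ v, |h v| ∂μ = ∫ v in E, h v ∂μ + ∫ v in Eᶜ, -h v ∂μ := hsplit
    _ ≤ 2 * C * TV + 2 * C * TV := by rw [hneg]; exact add_le_add hEb.2 (by linarith [hEcb.1])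
    _ = 4 * C * TV := by ring
end

section
/- For α, β > 0 and t ∈ (0,1], define I(t, α, β) = ∫₀ᵗ x^{α−1}(1−x)^{β−1} dx and M(t, α, β) = I(t, α+1, β) / I(t, α, β), so that M(t, α, β) is the conditional mean E[Z | Z < t] of a Beta(α, β) random variable Z. If α₀ > α₁ > 1 and 1 < β₀ < β₁, then for every t ∈ (0,1], M(t, α₁, β₁) < M(t, α₀, β₀). -/
open MeasureTheory Set

/-- Strict positivity of a set integral of a nonnegative function that is
nonzero on `Ioo 0 t` except possibly at one point `z`. -/
lemma betaAux_setIntegral_pos {t : ℝ} (ht : 0 < t) {f : ℝ → ℝ}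
    (hfi : IntegrableOn f (Ioc 0 t))
    (hnn : ∀ x ∈ Ioc 0 t, 0 ≤ f x) (z : ℝ)
    (hpos : ∀ x ∈ Ioo 0 t, x ≠ z → f x ≠ 0) :
    0 < ∫ x in Ioc 0 t, f x := by
  rw [setIntegral_pos_iff_support_of_nonneg_ae
    ((ae_restrict_iff' measurableSet_Ioc).2 (ae_of_all _ hnn)) hfi]
  have hsub : Ioo 0 t \ {z} ⊆ Function.support f ∩ Ioc 0 t := by
    intro x hx
    exact ⟨hpos x hx.1 (by simpa using hx.2), Ioo_subset_Ioc_self hx.1⟩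
  refine lt_of_lt_of_le ?_ (measure_mono hsub)
  rw [measure_diff_null (measure_singleton z), Real.volume_Ioo]
  simpa using ht

lemma betaAux_sign_nonneg {φ : ℝ → ℝ} {s : Set ℝ} (h : StrictMonoOn φ s)
    {x y : ℝ} (hx : x ∈ s) (hy : y ∈ s) : 0 ≤ (x - y) * (φ x - φ y) := by
  rcases le_or_gt x y with hxy | hxy
  · have h1 : φ x ≤ φ y := h.monotoneOn hx hy hxy
    nlinarith
  · have h1 : φ y < φ x := h hy hx hxy
    nlinarith

lemma betaAux_sign_pos {φ : ℝ → ℝ} {s : Set ℝ} (h : StrictMonoOn φ s)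
    {x y : ℝ} (hx : x ∈ s) (hy : y ∈ s) (hne : x ≠ y) :
    0 < (x - y) * (φ x - φ y) := by
  rcases hne.lt_or_gt with hxy | hxy
  · have h1 : φ x < φ y := h hx hy hxy
    nlinarith
  · have h1 : φ y < φ x := h hy hx hxy
    nlinarith

/-- Strict Chebyshev-type correlation inequality: if `φ` is strictly increasing on
`[0, t]` and `w` is a positive weight, then the `w·φ`-weighted mean of `x` exceeds
the `w`-weighted mean (in cross-multiplied form). -/
lemma betaAux_chebyshev {t : ℝ} (ht : 0 < t) (w φ : ℝ → ℝ)
    (hw : Continuous w) (hφ : Continuous φ)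
    (hw0 : ∀ x ∈ Ioo 0 t, 0 < w x) (hwnn : ∀ x ∈ Ioc 0 t, 0 ≤ w x)
    (hφm : StrictMonoOn φ (Icc 0 t)) :
    (∫ x in Ioc 0 t, x * w x) * (∫ x in Ioc 0 t, φ x * w x)
      < (∫ x in Ioc 0 t, x * φ x * w x) * (∫ x in Ioc 0 t, w x) := by
  have hIw : IntegrableOn w (Ioc 0 t) := hw.integrableOn_Ioc
  have hIφw : IntegrableOn (fun y => φ y * w y) (Ioc 0 t) := (hφ.mul hw).integrableOn_Ioc
  have hIxw : IntegrableOn (fun y => y * w y) (Ioc 0 t) := (continuous_id.mul hw).integrableOn_Ioc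
  have hIxφw : IntegrableOn (fun y => y * φ y * w y) (Ioc 0 t) :=
    ((continuous_id.mul hφ).mul hw).integrableOn_Ioc
  set A := ∫ x in Ioc 0 t, φ x * w x with hA
  set B := ∫ x in Ioc 0 t, w x with hB
  set C := ∫ x in Ioc 0 t, x * w x with hC
  set D := ∫ x in Ioc 0 t, x * φ x * w x with hD
  have hg_eq : ∀ x : ℝ,
      (∫ y in Ioc 0 t, (x - y) * (φ x - φ y) * (w x * w y))
        = x * φ x * w x * B - x * w x * A - φ x * w x * C + w x * D := by
    intro x
    have heq : (fun y => (x - y) * (φ x - φ y) * (w x * w y))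
        = fun y => ((x * φ x * w x) * w y - (x * w x) * (φ y * w y))
            - ((φ x * w x) * (y * w y) - (w x) * (y * φ y * w y)) := by
      funext y; ring
    have i1 : Integrable (fun y => (x * φ x * w x) * w y) (volume.restrict (Ioc 0 t)) :=
      hIw.const_mul _
    have i2 : Integrable (fun y => (x * w x) * (φ y * w y)) (volume.restrict (Ioc 0 t)) :=
      hIφw.const_mul _
    have i3 : Integrable (fun y => (φ x * w x) * (y * w y)) (volume.restrict (Ioc 0 t)) :=
      hIxw.const_mul _
    have i4 : Integrable (fun y => (w x) * (y * φ y * w y)) (volume.restrict (Ioc 0 t)) :=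
      hIxφw.const_mul _
    have i12 : Integrable (fun y => (x * φ x * w x) * w y - (x * w x) * (φ y * w y))
        (volume.restrict (Ioc 0 t)) := i1.sub i2
    have i34 : Integrable (fun y => (φ x * w x) * (y * w y) - (w x) * (y * φ y * w y))
        (volume.restrict (Ioc 0 t)) := i3.sub i4
    rw [heq, integral_sub i12 i34, integral_sub i1 i2, integral_sub i3 i4,
      integral_const_mul, integral_const_mul, integral_const_mul, integral_const_mul,
      ← hA, ← hB, ← hC, ← hD]
    ring
  have hg_nonneg : ∀ x ∈ Ioc 0 t,
      0 ≤ x * φ x * w x * B - x * w x * A - φ x * w x * C + w x * D := by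
    intro x hx
    rw [← hg_eq x]
    refine setIntegral_nonneg measurableSet_Ioc fun y hy => ?_
    have hxI : x ∈ Icc 0 t := ⟨hx.1.le, hx.2⟩
    have hyI : y ∈ Icc 0 t := ⟨hy.1.le, hy.2⟩
    exact mul_nonneg (betaAux_sign_nonneg hφm hxI hyI)
      (mul_nonneg (hwnn x hx) (hwnn y hy))
  have hg_pos : ∀ x ∈ Ioo 0 t,
      0 < x * φ x * w x * B - x * w x * A - φ x * w x * C + w x * D := by
    intro x hx
    rw [← hg_eq x]
    refine betaAux_setIntegral_pos ht ?_ ?_ x ?_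
    · exact (((continuous_const.sub continuous_id).mul (continuous_const.sub hφ)).mul
        (continuous_const.mul hw)).integrableOn_Ioc
    · intro y hy
      have hxI : x ∈ Icc 0 t := ⟨hx.1.le, hx.2.le⟩
      have hyI : y ∈ Icc 0 t := ⟨hy.1.le, hy.2⟩
      exact mul_nonneg (betaAux_sign_nonneg hφm hxI hyI)
        (mul_nonneg (hw0 x hx).le (hwnn y hy))
    · intro y hy hne
      have hxI : x ∈ Icc 0 t := ⟨hx.1.le, hx.2.le⟩
      have hyI : y ∈ Icc 0 t := ⟨hy.1.le, hy.2.le⟩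
      exact ne_of_gt (mul_pos (betaAux_sign_pos hφm hxI hyI hne.symm)
        (mul_pos (hw0 x hx) (hw0 y hy)))
  have hGpos : 0 < ∫ x in Ioc 0 t,
      (x * φ x * w x * B - x * w x * A - φ x * w x * C + w x * D) := by
    refine betaAux_setIntegral_pos ht ?_ hg_nonneg 0 fun x hx _ => ne_of_gt (hg_pos x hx)
    exact (((((continuous_id.mul hφ).mul hw).mul continuous_const).sub
      ((continuous_id.mul hw).mul continuous_const)).sub
      ((hφ.mul hw).mul continuous_const)).add (hw.mul continuous_const) |>.integrableOn_Ioc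
  have hval : (∫ x in Ioc 0 t,
      (x * φ x * w x * B - x * w x * A - φ x * w x * C + w x * D))
      = D * B - C * A - A * C + B * D := by
    have j1 : Integrable (fun x => x * φ x * w x * B) (volume.restrict (Ioc 0 t)) :=
      hIxφw.mul_const _
    have j2 : Integrable (fun x => x * w x * A) (volume.restrict (Ioc 0 t)) :=
      hIxw.mul_const _
    have j3 : Integrable (fun x => φ x * w x * C) (volume.restrict (Ioc 0 t)) :=
      hIφw.mul_const _
    have j4 : Integrable (fun x => w x * D) (volume.restrict (Ioc 0 t)) :=
      hIw.mul_const _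
    have j12 : Integrable (fun x => x * φ x * w x * B - x * w x * A)
        (volume.restrict (Ioc 0 t)) := j1.sub j2
    have j123 : Integrable (fun x => x * φ x * w x * B - x * w x * A - φ x * w x * C)
        (volume.restrict (Ioc 0 t)) := j12.sub j3
    rw [integral_add j123 j4, integral_sub j12 j3, integral_sub j1 j2,
      integral_mul_const, integral_mul_const, integral_mul_const, integral_mul_const,
      ← hA, ← hB, ← hC, ← hD]
  rw [hval] at hGpos
  linarith

/-- Antitone version of the Chebyshev inequality. -/
lemma betaAux_chebyshev_anti {t : ℝ} (ht : 0 < t) (w φ : ℝ → ℝ)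
    (hw : Continuous w) (hφ : Continuous φ)
    (hw0 : ∀ x ∈ Ioo 0 t, 0 < w x) (hwnn : ∀ x ∈ Ioc 0 t, 0 ≤ w x)
    (hφa : StrictAntiOn φ (Icc 0 t)) :
    (∫ x in Ioc 0 t, x * φ x * w x) * (∫ x in Ioc 0 t, w x)
      < (∫ x in Ioc 0 t, x * w x) * (∫ x in Ioc 0 t, φ x * w x) := by
  have hm : StrictMonoOn (fun x => -φ x) (Icc 0 t) := fun x hx y hy hxy =>
    neg_lt_neg (hφa hx hy hxy)
  have h := betaAux_chebyshev ht w (fun x => -φ x) hw hφ.neg hw0 hwnn hm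
  have e1 : (∫ x in Ioc 0 t, -φ x * w x) = -(∫ x in Ioc 0 t, φ x * w x) := by
    rw [← integral_neg]
    exact setIntegral_congr_fun measurableSet_Ioc fun x _ => by ring
  have e2 : (∫ x in Ioc 0 t, x * -φ x * w x) = -(∫ x in Ioc 0 t, x * φ x * w x) := by
    rw [← integral_neg]
    exact setIntegral_congr_fun measurableSet_Ioc fun x _ => by ring
  rw [e1, e2] at h
  nlinarith [h]

/-- Monotonicity of the conditional mean of Beta distributions below a
threshold: with `I(t, a, b) = ∫₀ᵗ x^(a-1) (1-x)^(b-1) dx` and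
`M(t, a, b) = I(t, a+1, b) / I(t, a, b)`, if `a₀ > a₁ > 1` and `1 < b₀ < b₁`, then
`M(t, a₁, b₁) < M(t, a₀, b₀)` for every `t ∈ (0, 1]`. -/
theorem beta_conditional_mean_lt
    (t a₀ a₁ b₀ b₁ : ℝ) (ht0 : 0 < t) (ht1 : t ≤ 1)
    (ha₁ : 1 < a₁) (ha : a₁ < a₀) (hb₀ : 1 < b₀) (hb : b₀ < b₁) :
    (∫ x in (0:ℝ)..t, x ^ a₁ * (1 - x) ^ (b₁ - 1)) /
        (∫ x in (0:ℝ)..t, x ^ (a₁ - 1) * (1 - x) ^ (b₁ - 1))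
      < (∫ x in (0:ℝ)..t, x ^ a₀ * (1 - x) ^ (b₀ - 1)) /
        (∫ x in (0:ℝ)..t, x ^ (a₀ - 1) * (1 - x) ^ (b₀ - 1)) := by
  -- continuity of the building blocks
  have contP : ∀ c : ℝ, 0 ≤ c → Continuous fun x : ℝ => x ^ c := fun c hc =>
    Real.continuous_rpow_const hc
  have contQ : ∀ c : ℝ, 0 ≤ c → Continuous fun x : ℝ => (1 - x) ^ c := fun c hc =>
    (Real.continuous_rpow_const hc).comp (continuous_const.sub continuous_id)
  -- generic beta density facts
  have hwcont : ∀ p q : ℝ, 0 ≤ p → 0 ≤ q →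
      Continuous fun x : ℝ => x ^ p * (1 - x) ^ q := fun p q hp hq =>
    (contP p hp).mul (contQ q hq)
  have hwpos : ∀ p q : ℝ, ∀ x ∈ Ioo 0 t, 0 < x ^ p * (1 - x) ^ q := by
    intro p q x hx
    exact mul_pos (Real.rpow_pos_of_pos hx.1 _)
      (Real.rpow_pos_of_pos (by linarith [hx.2] : (0:ℝ) < 1 - x) _)
  have hwnn : ∀ p q : ℝ, ∀ x ∈ Ioc 0 t, 0 ≤ x ^ p * (1 - x) ^ q := by
    intro p q x hx
    exact mul_nonneg (Real.rpow_nonneg hx.1.le _)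
      (Real.rpow_nonneg (by linarith [hx.2] : (0:ℝ) ≤ 1 - x) _)
  -- positivity of the denominators
  have hdenpos : ∀ p q : ℝ, 0 ≤ p → 0 ≤ q →
      0 < ∫ x in Ioc 0 t, x ^ p * (1 - x) ^ q := by
    intro p q hp hq
    exact betaAux_setIntegral_pos ht0 ((hwcont p q hp hq).integrableOn_Ioc)
      (hwnn p q) 0 (fun x hx _ => ne_of_gt (hwpos p q x hx))
  have ha₀1 : (1:ℝ) < a₀ := ha₁.trans ha
  have hb₁1 : (1:ℝ) < b₁ := hb₀.trans hb
  -- Step A : increase a from a₁ to a₀ with b = b₁ fixed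
  have stepA :
      (∫ x in Ioc 0 t, x ^ a₁ * (1 - x) ^ (b₁ - 1)) *
        (∫ x in Ioc 0 t, x ^ (a₀ - 1) * (1 - x) ^ (b₁ - 1))
      < (∫ x in Ioc 0 t, x ^ a₀ * (1 - x) ^ (b₁ - 1)) *
        (∫ x in Ioc 0 t, x ^ (a₁ - 1) * (1 - x) ^ (b₁ - 1)) := by
    have hφm : StrictMonoOn (fun x : ℝ => x ^ (a₀ - a₁)) (Icc 0 t) := by
      intro x hx y hy hxy
      exact Real.rpow_lt_rpow hx.1 hxy (by linarith)
    have h := betaAux_chebyshev ht0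
      (fun x => x ^ (a₁ - 1) * (1 - x) ^ (b₁ - 1)) (fun x => x ^ (a₀ - a₁))
      (hwcont _ _ (by linarith) (by linarith)) (contP _ (by linarith))
      (hwpos _ _) (hwnn _ _) hφm
    have e1 : (∫ x in Ioc 0 t, x * (x ^ (a₁ - 1) * (1 - x) ^ (b₁ - 1)))
        = ∫ x in Ioc 0 t, x ^ a₁ * (1 - x) ^ (b₁ - 1) := by
      refine setIntegral_congr_fun measurableSet_Ioc fun x hx => ?_
      rw [show a₁ = 1 + (a₁ - 1) by ring, Real.rpow_add hx.1, Real.rpow_one]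
      ring
    have e2 : (∫ x in Ioc 0 t, x ^ (a₀ - a₁) * (x ^ (a₁ - 1) * (1 - x) ^ (b₁ - 1)))
        = ∫ x in Ioc 0 t, x ^ (a₀ - 1) * (1 - x) ^ (b₁ - 1) := by
      refine setIntegral_congr_fun measurableSet_Ioc fun x hx => ?_
      rw [show a₀ - 1 = (a₀ - a₁) + (a₁ - 1) by ring, Real.rpow_add hx.1]
      ring
    have e3 : (∫ x in Ioc 0 t, x * x ^ (a₀ - a₁) * (x ^ (a₁ - 1) * (1 - x) ^ (b₁ - 1)))
        = ∫ x in Ioc 0 t, x ^ a₀ * (1 - x) ^ (b₁ - 1) := by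
      refine setIntegral_congr_fun measurableSet_Ioc fun x hx => ?_
      rw [show a₀ = 1 + ((a₀ - a₁) + (a₁ - 1)) by ring, Real.rpow_add hx.1,
        Real.rpow_add hx.1, Real.rpow_one]
      ring
    rw [e1, e2, e3] at h
    exact h
  -- Step B : increase b from b₀ to b₁ with a = a₀ fixed
  have hsplitB : ∀ x ∈ Ioc 0 t,
      (1 - x) ^ (b₁ - b₀) * (1 - x) ^ (b₀ - 1) = (1 - x) ^ (b₁ - 1) := by
    intro x hx
    rcases lt_or_eq_of_le (hx.2.trans ht1) with h1 | h1
    · rw [← Real.rpow_add (by linarith : (0:ℝ) < 1 - x)]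
      norm_num
    · rw [show (1:ℝ) - x = 0 by rw [h1]; ring]
      rw [Real.zero_rpow (by linarith : b₁ - b₀ ≠ 0),
        Real.zero_rpow (by linarith : b₁ - 1 ≠ 0), zero_mul]
  have stepB :
      (∫ x in Ioc 0 t, x ^ a₀ * (1 - x) ^ (b₁ - 1)) *
        (∫ x in Ioc 0 t, x ^ (a₀ - 1) * (1 - x) ^ (b₀ - 1))
      < (∫ x in Ioc 0 t, x ^ a₀ * (1 - x) ^ (b₀ - 1)) *
        (∫ x in Ioc 0 t, x ^ (a₀ - 1) * (1 - x) ^ (b₁ - 1)) := by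
    have hφa : StrictAntiOn (fun x : ℝ => (1 - x) ^ (b₁ - b₀)) (Icc 0 t) := by
      intro x hx y hy hxy
      exact Real.rpow_lt_rpow (by linarith [hy.2, ht1] : (0:ℝ) ≤ 1 - y)
        (by linarith) (by linarith)
    have h := betaAux_chebyshev_anti ht0
      (fun x => x ^ (a₀ - 1) * (1 - x) ^ (b₀ - 1)) (fun x => (1 - x) ^ (b₁ - b₀))
      (hwcont _ _ (by linarith) (by linarith)) (contQ _ (by linarith))
      (hwpos _ _) (hwnn _ _) hφa
    have e1 : (∫ x in Ioc 0 t, x * (x ^ (a₀ - 1) * (1 - x) ^ (b₀ - 1)))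
        = ∫ x in Ioc 0 t, x ^ a₀ * (1 - x) ^ (b₀ - 1) := by
      refine setIntegral_congr_fun measurableSet_Ioc fun x hx => ?_
      rw [show a₀ = 1 + (a₀ - 1) by ring, Real.rpow_add hx.1, Real.rpow_one]
      ring
    have e2 : (∫ x in Ioc 0 t, (1 - x) ^ (b₁ - b₀) * (x ^ (a₀ - 1) * (1 - x) ^ (b₀ - 1)))
        = ∫ x in Ioc 0 t, x ^ (a₀ - 1) * (1 - x) ^ (b₁ - 1) := by
      refine setIntegral_congr_fun measurableSet_Ioc fun x hx => ?_
      rw [← hsplitB x hx]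
      ring
    have e3 : (∫ x in Ioc 0 t, x * (1 - x) ^ (b₁ - b₀) * (x ^ (a₀ - 1) * (1 - x) ^ (b₀ - 1)))
        = ∫ x in Ioc 0 t, x ^ a₀ * (1 - x) ^ (b₁ - 1) := by
      refine setIntegral_congr_fun measurableSet_Ioc fun x hx => ?_
      rw [← hsplitB x hx, show a₀ = 1 + (a₀ - 1) by ring, Real.rpow_add hx.1, Real.rpow_one]
      ring
    rw [e1, e2, e3] at h
    exact h
  -- combine
  have hD1 := hdenpos (a₁ - 1) (b₁ - 1) (by linarith) (by linarith)
  have hDm := hdenpos (a₀ - 1) (b₁ - 1) (by linarith) (by linarith)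
  have hD0 := hdenpos (a₀ - 1) (b₀ - 1) (by linarith) (by linarith)
  rw [intervalIntegral.integral_of_le ht0.le, intervalIntegral.integral_of_le ht0.le,
    intervalIntegral.integral_of_le ht0.le, intervalIntegral.integral_of_le ht0.le]
  calc (∫ x in Ioc 0 t, x ^ a₁ * (1 - x) ^ (b₁ - 1)) /
        (∫ x in Ioc 0 t, x ^ (a₁ - 1) * (1 - x) ^ (b₁ - 1))
      < (∫ x in Ioc 0 t, x ^ a₀ * (1 - x) ^ (b₁ - 1)) /
        (∫ x in Ioc 0 t, x ^ (a₀ - 1) * (1 - x) ^ (b₁ - 1)) :=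
        (div_lt_div_iff₀ hD1 hDm).2 stepA
    _ < (∫ x in Ioc 0 t, x ^ a₀ * (1 - x) ^ (b₀ - 1)) /
        (∫ x in Ioc 0 t, x ^ (a₀ - 1) * (1 - x) ^ (b₀ - 1)) :=
        (div_lt_div_iff₀ hDm hD0).2 stepB
end

section
/- Suppose the pair (X, Y) is supported on a finite set, where X takes values in a finite set 𝒳 = {x₁, …, x_m} and Y takes values in a set 𝒴, and let A = α(X). Let d : 𝒳 → [0,1], let U be uniform on [0,1] independent of (X, Y), and let D = 1{U ≤ d(X)}. Then D is conditionally independent of A given Y if and only if for every a ∈ 𝒜 and every y ∈ 𝒴 with Pr(A = a, Y = y) > 0, Σ_{i=1}^m d(x_i)·Pr(X = x_i | A = a, Y = y) = Σ_{i=1}^m d(x_i)·Pr(X = x_i | Y = y); in particular, the condition D ⫫ A | Y is equivalent to a finite system of constraints that are linear in the values d(x₁), …, d(x_m). -/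
/-!
Given `(X, Y)`, the decision `D = 1{U ≤ d(X)}` is a Bernoulli(`d(X)`) coin flipped independently
of everything else, so `P(D = 1, (X, Y) ∈ B) = ∑ₓ d(x) P(X = x, (X, Y) ∈ B)` for every `B`:
such probabilities are linear in the values of `d`. On the other hand, for events
`D`, `A`, `Y`, the product rule `P(D ∩ A | Y) = P(D | Y) P(A | Y)` is equivalent to
`P(D | A ∩ Y) = P(D | Y)` whenever `A ∩ Y` has positive probability, and holds trivially otherwise.
-/

open MeasureTheory ProbabilityTheory Set Function

theorem volume_restrict_unitInterval_Iic {c : ℝ} (hc : c ∈ Icc (0 : ℝ) 1) :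
    volume.restrict (Icc (0 : ℝ) 1) (Iic c) = ENNReal.ofReal c := by
  have hinter : Iic c ∩ Icc 0 1 = Icc 0 c := by
    ext t
    simp only [mem_inter_iff, mem_Iic, mem_Icc]
    exact ⟨fun h => ⟨h.2.1, h.1⟩, fun h => ⟨h.2, h.1, h.2.trans hc.2⟩⟩
  rw [Measure.restrict_apply measurableSet_Iic, hinter, Real.volume_Icc, sub_zero]

theorem measure_le_comp_inter_preimage_eq_sum {Ω β 𝒳 : Type*} [MeasurableSpace Ω]
    [MeasurableSpace β] [Fintype 𝒳] [MeasurableSpace 𝒳] [MeasurableSingletonClass 𝒳]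
    {P : Measure Ω} {U : Ω → ℝ} {Z : Ω → β} (hU : Measurable U) (hZ : Measurable Z)
    (hindep : IndepFun U Z P) {φ : β → 𝒳} (hφ : Measurable φ) (t : 𝒳 → ℝ) {B : Set β}
    (hB : MeasurableSet B) :
    P ({ω | U ω ≤ t (φ (Z ω))} ∩ Z ⁻¹' B)
      = ∑ x, P (U ⁻¹' Iic (t x)) * P ({ω | φ (Z ω) = x} ∩ Z ⁻¹' B) := by
  have hfiber : ∀ x, MeasurableSet (φ ⁻¹' {x} ∩ B) := fun x =>
    (hφ (measurableSet_singleton x)).inter hB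
  have hdecomp : {ω | U ω ≤ t (φ (Z ω))} ∩ Z ⁻¹' B
      = ⋃ x, U ⁻¹' Iic (t x) ∩ Z ⁻¹' (φ ⁻¹' {x} ∩ B) := by
    ext ω
    simp [and_left_comm]
  have hdisj : Pairwise (Disjoint on fun x => U ⁻¹' Iic (t x) ∩ Z ⁻¹' (φ ⁻¹' {x} ∩ B)) :=
    fun x x' hxx' => Disjoint.mono inter_subset_right inter_subset_right
      (((pairwiseDisjoint_fiber φ univ (mem_univ x) (mem_univ x') hxx').mono
        inter_subset_left inter_subset_left).preimage Z)
  rw [hdecomp, measure_iUnion hdisj fun x => (hU measurableSet_Iic).inter (hZ (hfiber x)),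
    tsum_fintype]
  exact Finset.sum_congr rfl fun x _ =>
    hindep.measure_inter_preimage_eq_mul _ _ measurableSet_Iic (hfiber x)

theorem div_eq_div_mul_div_iff_div_eq {N M p q : ℝ} (hp : p ≠ 0) (hN : q = 0 → N = 0) :
    N / p = M / p * (q / p) ↔ (q ≠ 0 → N / q = M / p) := by
  rcases eq_or_ne q 0 with rfl | hq
  · simp [hN rfl]
  · simp only [ne_eq, hq, not_false_eq_true, forall_const]
    rw [div_eq_div_iff hq hp]
    field_simp

theorem cond_inter_eq_mul_iff_cond_eq {Ω : Type*} [MeasurableSpace Ω] (P : Measure Ω)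
    [IsFiniteMeasure P] (D A Y : Set Ω) :
    (0 < P Y → (P (D ∩ A ∩ Y)).toReal / (P Y).toReal
        = (P (D ∩ Y)).toReal / (P Y).toReal * ((P (A ∩ Y)).toReal / (P Y).toReal)) ↔
      (0 < P (A ∩ Y) → (P (D ∩ A ∩ Y)).toReal / (P (A ∩ Y)).toReal
        = (P (D ∩ Y)).toReal / (P Y).toReal) := by
  have hpos : ∀ s, 0 < P s ↔ (P s).toReal ≠ 0 := fun s => by
    simp [pos_iff_ne_zero, ENNReal.toReal_eq_zero_iff, measure_ne_top]
  have hDAY : (P (A ∩ Y)).toReal = 0 → (P (D ∩ A ∩ Y)).toReal = 0 := fun h =>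
    le_antisymm (h ▸ ENNReal.toReal_mono (measure_ne_top _ _)
      (measure_mono (inter_subset_inter_left Y inter_subset_right))) ENNReal.toReal_nonneg
  rcases eq_or_ne (P Y) 0 with hY | hY
  · simp [hY, measure_mono_null inter_subset_right hY]
  · rw [hpos (A ∩ Y), iff_true_intro (pos_iff_ne_zero.2 hY), true_imp_iff]
    exact div_eq_div_mul_div_iff_div_eq ((hpos Y).1 (pos_iff_ne_zero.2 hY)) hDAY

theorem counterfactual_equalized_odds_linear_constraints_general
    {Ω 𝒳 𝒴 𝒜 : Type*} [MeasurableSpace Ω]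
    [Fintype 𝒳] [MeasurableSpace 𝒳] [MeasurableSingletonClass 𝒳]
    [Fintype 𝒴] [MeasurableSpace 𝒴] [MeasurableSingletonClass 𝒴]
    (P : Measure Ω) [IsProbabilityMeasure P]
    (X : Ω → 𝒳) (hX : Measurable X)
    (Y : Ω → 𝒴) (hY : Measurable Y)
    (α : 𝒳 → 𝒜)
    (U : Ω → ℝ) (hU : Measurable U)
    -- `U` is uniform on `[0,1]` and independent of `(X, Y)`
    (hUunif : Measure.map U P = volume.restrict (Set.Icc (0 : ℝ) 1))
    (hindep : ProbabilityTheory.IndepFun U (fun ω => (X ω, Y ω)) P)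
    -- the decision policy
    (d : 𝒳 → ℝ) (hd01 : ∀ x, d x ∈ Set.Icc (0 : ℝ) 1) :
    -- `D ⫫ A | Y` (with `D = 1{U ≤ d(X)}`) iff the linear constraints hold
    ((∀ (a : 𝒜) (y : 𝒴), 0 < P {ω | Y ω = y} →
        (P ({ω | U ω ≤ d (X ω)} ∩ {ω | α (X ω) = a} ∩ {ω | Y ω = y})).toReal
            / (P {ω | Y ω = y}).toReal
          = ((P ({ω | U ω ≤ d (X ω)} ∩ {ω | Y ω = y})).toReal
              / (P {ω | Y ω = y}).toReal)
            * ((P ({ω | α (X ω) = a} ∩ {ω | Y ω = y})).toReal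
              / (P {ω | Y ω = y}).toReal)) ↔
      (∀ (a : 𝒜) (y : 𝒴), 0 < P ({ω | α (X ω) = a} ∩ {ω | Y ω = y}) →
        ∑ x : 𝒳, d x *
            ((P ({ω | X ω = x} ∩ ({ω | α (X ω) = a} ∩ {ω | Y ω = y}))).toReal
              / (P ({ω | α (X ω) = a} ∩ {ω | Y ω = y})).toReal)
          = ∑ x : 𝒳, d x *
            ((P ({ω | X ω = x} ∩ {ω | Y ω = y})).toReal
              / (P {ω | Y ω = y}).toReal))) := by
  have hthreshold : ∀ B : Set (𝒳 × 𝒴),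
      (P ({ω | U ω ≤ d (X ω)} ∩ (fun ω => (X ω, Y ω)) ⁻¹' B)).toReal
        = ∑ x, d x * (P ({ω | X ω = x} ∩ (fun ω => (X ω, Y ω)) ⁻¹' B)).toReal := fun B => by
    rw [measure_le_comp_inter_preimage_eq_sum hU (hX.prodMk hY) hindep measurable_fst d
      B.toFinite.measurableSet, ENNReal.toReal_sum fun x _ => by finiteness]
    refine Finset.sum_congr rfl fun x _ => ?_
    rw [ENNReal.toReal_mul, ← Measure.map_apply hU measurableSet_Iic, hUunif,
      volume_restrict_unitInterval_Iic (hd01 x), ENNReal.toReal_ofReal (hd01 x).1]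
  refine forall₂_congr fun a y => ?_
  have hthreshold_AY : (P ({ω | U ω ≤ d (X ω)} ∩ {ω | α (X ω) = a} ∩ {ω | Y ω = y})).toReal
      = ∑ x, d x * (P ({ω | X ω = x} ∩ ({ω | α (X ω) = a} ∩ {ω | Y ω = y}))).toReal := by
    rw [inter_assoc]
    exact hthreshold {p | α p.1 = a ∧ p.2 = y}
  have hthreshold_Y : (P ({ω | U ω ≤ d (X ω)} ∩ {ω | Y ω = y})).toReal
      = ∑ x, d x * (P ({ω | X ω = x} ∩ {ω | Y ω = y})).toReal :=
    hthreshold {p | p.2 = y}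
  conv_rhs => simp only [← mul_div_assoc, ← Finset.sum_div, ← hthreshold_AY, ← hthreshold_Y]
  exact cond_inter_eq_mul_iff_cond_eq P _ _ _

/-- For finitely supported `(X, Y)` and decisions `D = 1{U ≤ d(X)}` with `U`
uniform and independent of `(X, Y)`, the conditional independence `D ⫫ A | Y` holds iff a
finite system of constraints, linear in the values `d(x)`, holds. -/
theorem counterfactual_equalized_odds_linear_constraints
    {Ω 𝒳 𝒴 𝒜 : Type*} [MeasurableSpace Ω]
    [Fintype 𝒳] [MeasurableSpace 𝒳] [MeasurableSingletonClass 𝒳]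
    [Fintype 𝒴] [MeasurableSpace 𝒴] [MeasurableSingletonClass 𝒴]
    [Fintype 𝒜]
    (P : Measure Ω) [IsProbabilityMeasure P]
    (X : Ω → 𝒳) (hX : Measurable X)
    (Y : Ω → 𝒴) (hY : Measurable Y)
    (α : 𝒳 → 𝒜)
    (U : Ω → ℝ) (hU : Measurable U)
    -- `U` is uniform on `[0,1]` and independent of `(X, Y)`
    (hUunif : Measure.map U P = volume.restrict (Set.Icc (0 : ℝ) 1))
    (hindep : ProbabilityTheory.IndepFun U (fun ω => (X ω, Y ω)) P)
    -- the decision policy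
    (d : 𝒳 → ℝ) (hd01 : ∀ x, d x ∈ Set.Icc (0 : ℝ) 1) :
    -- `D ⫫ A | Y` (with `D = 1{U ≤ d(X)}`) iff the linear constraints hold
    ((∀ (a : 𝒜) (y : 𝒴), 0 < P {ω | Y ω = y} →
        (P ({ω | U ω ≤ d (X ω)} ∩ {ω | α (X ω) = a} ∩ {ω | Y ω = y})).toReal
            / (P {ω | Y ω = y}).toReal
          = ((P ({ω | U ω ≤ d (X ω)} ∩ {ω | Y ω = y})).toReal
              / (P {ω | Y ω = y}).toReal)
            * ((P ({ω | α (X ω) = a} ∩ {ω | Y ω = y})).toReal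
              / (P {ω | Y ω = y}).toReal)) ↔
      (∀ (a : 𝒜) (y : 𝒴), 0 < P ({ω | α (X ω) = a} ∩ {ω | Y ω = y}) →
        ∑ x : 𝒳, d x *
            ((P ({ω | X ω = x} ∩ ({ω | α (X ω) = a} ∩ {ω | Y ω = y}))).toReal
              / (P ({ω | α (X ω) = a} ∩ {ω | Y ω = y})).toReal)
          = ∑ x : 𝒳, d x *
            ((P ({ω | X ω = x} ∩ {ω | Y ω = y})).toReal
              / (P {ω | Y ω = y}).toReal))) :=
  counterfactual_equalized_odds_linear_constraints_general P X hX Y hY α U hU hUunif hindep d hd01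
end
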